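/- arXiv:0912.4445 — 4 statements merged into one kernel-verified Lean document; each statement's English description precedes it below -/
import Mathlib

section
/- Let a < b be real numbers and let f, g : [a,b] → ℝ be functions with f ≥ 0 and g ≥ 0, such that g is continuously differentiable, f is monotone increasing (nondecreasing), the set I_reg ⊆ [a,b] of points at which f is differentiable is open, and at every point τ₀ ∈ I_reg the product function τ ↦ g(τ)·f(τ) has derivative (g·f)'(τ₀) ≥ 0. Then τ ↦ g(τ)·f(τ) is monotone increasing (nondecreasing) on [a,b]. -/
/-!
Write `h = g * f`. As `f` is monotone and `g ≥ 0` is continuous, `h` is upper semicontinuous from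
the left, and as `g` is Lipschitz, `h t ≥ h s - K (t - s)` for `s ≤ t`. Off a null set (the points
where `f` is not differentiable), the lower right Dini derivative of `h` is `≥ 0`. Cover that null
set by an open set `V` of measure `< ε` and let `ψ t = |V ∩ (-∞, t]|`: it is monotone, bounded by
`ε`, and grows at unit rate just to the right of every exceptional point. Hence
`φ = h + ε id + K ψ` satisfies `φ s ≤ φ t` for `t` slightly to the right of any `s`, and a supremum
argument makes `φ` nondecreasing. Letting `ε → 0` gives `h x ≤ h y`.
-/

open Set Filter Topology MeasureTheory

theorem le_of_upperSemicontinuousWithinAt_Iic_of_frequently_le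
    {α β : Type*} [ConditionallyCompleteLinearOrder α] [TopologicalSpace α] [OrderTopology α]
    [LinearOrder β] {φ : α → β} {x y : α} (hxy : x ≤ y)
    (husc : ∀ s ∈ Ioc x y, UpperSemicontinuousWithinAt φ (Iic s) s)
    (hright : ∀ s ∈ Ico x y, ∃ᶠ t in 𝓝[>] s, φ s ≤ φ t) :
    φ x ≤ φ y := by
  set A := {t ∈ Icc x y | φ x ≤ φ t}
  have hxA : x ∈ A := ⟨⟨le_rfl, hxy⟩, le_rfl⟩
  have hA : BddAbove A := ⟨y, fun t ht => ht.1.2⟩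
  have hsup : sSup A ∈ Icc x y := ⟨le_csSup hA hxA, csSup_le ⟨x, hxA⟩ fun t ht => ht.1.2⟩
  have hsupA : sSup A ∈ A := by
    refine ⟨hsup, ?_⟩
    rcases hsup.1.eq_or_lt with hx | hx
    · exact hx ▸ le_rfl
    by_contra! hlt
    have : NeBot (𝓝[A] sSup A) := mem_closure_iff_nhdsWithin_neBot.1 (csSup_mem_closure ⟨x, hxA⟩ hA)
    obtain ⟨t, hφt, htA⟩ := (((husc _ ⟨hx, hsup.2⟩) _ hlt).filter_mono
      (nhdsWithin_mono _ fun t ht => le_csSup hA ht) |>.and self_mem_nhdsWithin).exists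
    exact (htA.2.trans_lt hφt).false
  rcases hsup.2.eq_or_lt with hy | hy
  · exact hy ▸ hsupA.2
  obtain ⟨t, hφt, hst, hty⟩ := ((hright _ ⟨hsup.1, hy⟩).and_eventually
    (Ioo_mem_nhdsGT hy)).exists
  exact absurd (le_csSup hA ⟨⟨hsup.1.trans hst.le, hty.le⟩, hsupA.2.trans hφt⟩) (not_le.2 hst)

theorem exists_monotone_bounded_unit_growth_on_null {N : Set ℝ} (hN : volume N = 0) {δ : ℝ}
    (hδ : 0 < δ) :
    ∃ ψ : ℝ → ℝ, Monotone ψ ∧ (∀ t, ψ t ∈ Icc 0 δ) ∧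
      ∀ s ∈ N, ∀ᶠ t in 𝓝[>] s, ψ s + (t - s) ≤ ψ t := by
  obtain ⟨V, hNV, hVo, hV⟩ := N.exists_isOpen_lt_of_lt (ENNReal.ofReal δ)
    (by rwa [hN, ENNReal.ofReal_pos])
  have hfin : ∀ t, volume (V ∩ Iic t) ≠ ⊤ := fun t =>
    measure_ne_top_of_subset inter_subset_left hV.ne_top
  refine ⟨fun t => volume.real (V ∩ Iic t),
    fun s t hst => measureReal_mono (inter_subset_inter_right _ (Iic_subset_Iic.2 hst)) (hfin t),
    fun t => ⟨measureReal_nonneg, ?_⟩, fun s hs => ?_⟩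
  · exact (measureReal_mono inter_subset_left hV.ne_top).trans
      (ENNReal.toReal_le_of_le_ofReal hδ.le hV.le)
  obtain ⟨u, hsu, hsuV⟩ :=
    exists_Ico_subset_of_mem_nhds (hVo.mem_nhds (hNV hs)) ⟨s + 1, by linarith⟩
  filter_upwards [Ioo_mem_nhdsGT hsu] with t ht
  have hdisj : Disjoint (V ∩ Iic s) (Ioc s t) :=
    disjoint_left.2 fun r hr hr' => (not_lt.2 hr.2) hr'.1
  have hsub : V ∩ Iic s ∪ Ioc s t ⊆ V ∩ Iic t := union_subset
    (inter_subset_inter_right _ (Iic_subset_Iic.2 ht.1.le))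
    fun r hr => ⟨hsuV ⟨hr.1.le, hr.2.trans_lt ht.2⟩, hr.2⟩
  calc volume.real (V ∩ Iic s) + (t - s) = volume.real (V ∩ Iic s ∪ Ioc s t) := by
        rw [measureReal_union hdisj measurableSet_Ioc (hfin s) measure_Ioc_lt_top.ne,
          Real.volume_real_Ioc_of_le ht.1.le]
    _ ≤ volume.real (V ∩ Iic t) := measureReal_mono hsub (hfin t)

theorem Monotone.upperSemicontinuousWithinAt_Iic {α β : Type*} [TopologicalSpace α] [Preorder α]
    [Preorder β] {φ : α → β} (hφ : Monotone φ) (s : α) :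
    UpperSemicontinuousWithinAt φ (Iic s) s :=
  fun _ hc => eventually_nhdsWithin_of_forall fun _ ht => (hφ ht).trans_lt hc

theorem HasDerivWithinAt.eventually_add_mul_sub_le {h : ℝ → ℝ} {d s c : ℝ}
    (hd : HasDerivWithinAt h d (Ioi s) s) (hc : c < d) :
    ∀ᶠ t in 𝓝[>] s, h s + c * (t - s) ≤ h t := by
  filter_upwards [((hasDerivWithinAt_iff_tendsto_slope' (lt_irrefl s)).1 hd).eventually_const_lt hc,
    self_mem_nhdsWithin] with t hct hst
  rw [slope_def_field, lt_div_iff₀ (sub_pos.2 hst)] at hct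
  linarith

theorem le_of_ae_lowerRightDini_nonneg {h : ℝ → ℝ} {x y K : ℝ} (hxy : x ≤ y) (hK : 0 ≤ K)
    (husc : ∀ s ∈ Ioc x y, UpperSemicontinuousWithinAt h (Iic s) s)
    (hbound : ∀ s ∈ Ico x y, ∀ᶠ t in 𝓝[>] s, h s - K * (t - s) ≤ h t)
    (hae : ∀ᵐ s, s ∈ Ico x y → ∀ c < 0, ∀ᶠ t in 𝓝[>] s, h s + c * (t - s) ≤ h t) :
    h x ≤ h y := by
  have key : ∀ ε > 0, h x ≤ h y + ε * (y - x + K) := by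
    intro ε hε
    obtain ⟨ψ, hψ_mono, hψ_mem, hψ_growth⟩ :=
      exists_monotone_bounded_unit_growth_on_null (ae_iff.1 hae) hε
    have hmono : Monotone fun t => ε * t + K * ψ t := fun s t hst =>
      add_le_add (mul_le_mul_of_nonneg_left hst hε.le) (mul_le_mul_of_nonneg_left (hψ_mono hst) hK)
    have hφ := le_of_upperSemicontinuousWithinAt_Iic_of_frequently_le
      (φ := fun t => h t + (ε * t + K * ψ t)) hxy
      (fun s hs => (husc s hs).add (hmono.upperSemicontinuousWithinAt_Iic s)) fun s hs => by
        refine Eventually.frequently ?_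
        by_cases hdini : ∀ c < 0, ∀ᶠ t in 𝓝[>] s, h s + c * (t - s) ≤ h t
        · filter_upwards [hdini (-ε) (neg_lt_zero.2 hε), self_mem_nhdsWithin] with t ht hst
          have := mul_le_mul_of_nonneg_left (hψ_mono hst.le) hK
          linarith
        · filter_upwards [hbound s hs, hψ_growth s fun h' => hdini (h' hs), self_mem_nhdsWithin]
            with t hht hψt hst
          have := mul_le_mul_of_nonneg_left hψt hK
          have := mul_le_mul_of_nonneg_left hst.le hε.le
          linarith
    have := mul_le_mul_of_nonneg_left (hψ_mem y).2 hK
    have := mul_nonneg hK (hψ_mem x).1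
    linarith
  have hlim : Tendsto (fun ε => h y + ε * (y - x + K)) (𝓝[>] 0) (𝓝 (h y)) := by
    refine ((by fun_prop : Continuous fun ε => h y + ε * (y - x + K)).tendsto' 0 _ ?_).mono_left
      nhdsWithin_le_nhds
    simp
  exact ge_of_tendsto hlim (eventually_nhdsWithin_of_forall key)

theorem MonotoneOn.upperSemicontinuousWithinAt_Iic_mul {f g : ℝ → ℝ} {a b s : ℝ}
    (hf : MonotoneOn f (Icc a b)) (hg : ∀ τ ∈ Icc a b, 0 ≤ g τ)
    (hgs : ContinuousWithinAt g (Icc a b) s) (hs : s ∈ Ioc a b) :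
    UpperSemicontinuousWithinAt (fun τ => g τ * f τ) (Iic s) s := by
  intro c hc
  have hgs' : ContinuousWithinAt g (Iic s) s :=
    (continuousWithinAt_Icc_iff_Iic hs.1).1 (hgs.mono (Icc_subset_Icc_right hs.2))
  filter_upwards [(hgs'.mul_const (f s)).eventually_lt_const hc, Icc_mem_nhdsLE hs.1]
    with τ hτc hτ
  exact (mul_le_mul_of_nonneg_left (hf ⟨hτ.1, hτ.2.trans hs.2⟩ ⟨hs.1.le, hs.2⟩ hτ.2)
    (hg τ ⟨hτ.1, hτ.2.trans hs.2⟩)).trans_lt hτc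

theorem LipschitzOnWith.mul_sub_le_mul_of_monotoneOn {f g : ℝ → ℝ} {a b s t M : ℝ} {C : NNReal}
    (hg : LipschitzOnWith C g (Icc a b)) (hf : MonotoneOn f (Icc a b))
    (hf0 : ∀ τ ∈ Icc a b, 0 ≤ f τ) (hg0 : ∀ τ ∈ Icc a b, 0 ≤ g τ)
    (hs : s ∈ Icc a b) (ht : t ∈ Icc a b) (hst : s ≤ t) (hM : f s ≤ M) :
    g s * f s - C * M * (t - s) ≤ g t * f t := by
  have hgst : g s - g t ≤ C * (t - s) := by
    have := hg.dist_le_mul s hs t ht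
    rw [Real.dist_eq, Real.dist_eq, abs_sub_comm s, abs_of_nonneg (sub_nonneg.2 hst)] at this
    exact (le_abs_self _).trans this
  have hCts : 0 ≤ C * (t - s) := mul_nonneg C.2 (sub_nonneg.2 hst)
  calc g s * f s - C * M * (t - s) ≤ g s * f s - (g s - g t) * f s := by
        have := mul_le_mul hgst hM (hf0 s hs) hCts
        linarith
    _ = g t * f s := by ring
    _ ≤ g t * f t := mul_le_mul_of_nonneg_left (hf hs ht hst) (hg0 t ht)

theorem MonotoneOn.ae_mem_Ioo_differentiableAt {f : ℝ → ℝ} {a b : ℝ}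
    (hf : MonotoneOn f (Icc a b)) :
    ∀ᵐ s, s ∈ Icc a b → s ∈ Ioo a b ∧ DifferentiableAt ℝ f s := by
  filter_upwards [hf.ae_differentiableWithinAt_of_mem, (Ioo_ae_eq_Icc (a := a) (b := b)).mem_iff]
    with s hd hmem hs
  have hs' := hmem.2 hs
  exact ⟨hs', (hd hs).differentiableAt (Icc_mem_nhds hs'.1 hs'.2)⟩

theorem stmt0_general (a b : ℝ) (f g : ℝ → ℝ)
    (hf_nonneg : ∀ τ ∈ Set.Icc a b, 0 ≤ f τ)
    (hg_nonneg : ∀ τ ∈ Set.Icc a b, 0 ≤ g τ)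
    (hgC1 : ContDiffOn ℝ 1 g (Set.Icc a b))
    (hf_mono : MonotoneOn f (Set.Icc a b))
    (hderiv_nonneg : ∀ τ₀ ∈ {τ : ℝ | τ ∈ Set.Icc a b ∧ DifferentiableAt ℝ f τ},
      0 ≤ deriv (fun τ => g τ * f τ) τ₀) :
    MonotoneOn (fun τ => g τ * f τ) (Set.Icc a b) := by
  obtain ⟨C, hC⟩ := hgC1.exists_lipschitzOnWith one_ne_zero (convex_Icc a b) isCompact_Icc
  intro x hx y hy hxy
  have hxyI : Icc x y ⊆ Icc a b := Icc_subset_Icc hx.1 hy.2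
  refine le_of_ae_lowerRightDini_nonneg (h := fun τ => g τ * f τ) hxy
    (mul_nonneg C.2 (hf_nonneg y hy)) ?_ ?_ ?_
  · exact fun s hs => hf_mono.upperSemicontinuousWithinAt_Iic_mul hg_nonneg
      (hgC1.continuousOn s (hxyI (Ioc_subset_Icc_self hs))) ⟨hx.1.trans_lt hs.1, hs.2.trans hy.2⟩
  · intro s hs
    have hsI := hxyI (Ico_subset_Icc_self hs)
    filter_upwards [Ioo_mem_nhdsGT hs.2] with t ht
    exact hC.mul_sub_le_mul_of_monotoneOn hf_mono hf_nonneg hg_nonneg hsI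
      (hxyI ⟨hs.1.trans ht.1.le, ht.2.le⟩) ht.1.le (hf_mono hsI hy hs.2.le)
  · filter_upwards [hf_mono.ae_mem_Ioo_differentiableAt] with s hs hsxy c hc
    obtain ⟨hsab, hfd⟩ := hs (hxyI (Ico_subset_Icc_self hsxy))
    have hgd : DifferentiableAt ℝ g s :=
      (hgC1.differentiableOn one_ne_zero s (Ioo_subset_Icc_self hsab)).differentiableAt
        (Icc_mem_nhds hsab.1 hsab.2)
    exact (hgd.mul hfd).hasDerivAt.hasDerivWithinAt.eventually_add_mul_sub_le
      (hc.trans_le (hderiv_nonneg s ⟨Ioo_subset_Icc_self hsab, hfd⟩))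

/-- **Lemma (monotonicity of products).**  Let `a < b` and `f, g : [a,b] → ℝ` with
`f ≥ 0`, `g ≥ 0`, `g` continuously differentiable, `f` monotone increasing, the set
`I_reg ⊆ [a,b]` of points at which `f` is differentiable open, and `(g·f)'(τ₀) ≥ 0`
at every `τ₀ ∈ I_reg`.  Then `τ ↦ g(τ)·f(τ)` is monotone increasing on `[a,b]`. -/
theorem stmt0 (a b : ℝ) (hab : a < b) (f g : ℝ → ℝ)
    (hf_nonneg : ∀ τ ∈ Set.Icc a b, 0 ≤ f τ)
    (hg_nonneg : ∀ τ ∈ Set.Icc a b, 0 ≤ g τ)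
    (hgC1 : ContDiffOn ℝ 1 g (Set.Icc a b))
    (hf_mono : MonotoneOn f (Set.Icc a b))
    (hIreg_open : IsOpen {τ : ℝ | τ ∈ Set.Icc a b ∧ DifferentiableAt ℝ f τ})
    (hderiv_nonneg : ∀ τ₀ ∈ {τ : ℝ | τ ∈ Set.Icc a b ∧ DifferentiableAt ℝ f τ},
      0 ≤ deriv (fun τ => g τ * f τ) τ₀) :
    MonotoneOn (fun τ => g τ * f τ) (Set.Icc a b) :=
  stmt0_general a b f g hf_nonneg hg_nonneg hgC1 hf_mono hderiv_nonneg
end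

section
/- Suppose the immersion x is a J-curve in these coordinates and moreover the parametrization is graphical: x¹(y¹,y²) = y¹ and x²(y¹,y²) = y². Then for every μ = 3,…,N the component x^μ satisfies the quasilinear elliptic equation γ^{ij}·∂_i∂_j x^μ = ℱ^μ, where ℱ^μ := γ^{ij}·∂_i x^α·∂_j x^β·( ∂_k x^μ·Γ^k_{αβ}(x) − ∂_k x^μ·Q^k_{αβ}(x) + Q^μ_{αβ}(x) − Γ^μ_{αβ}(x) ) (the index k summed over 1,2). -/
open scoped BigOperators

open scoped ContDiff Matrix


/-- Partial derivative `∂_i f` of a function on (an open subset of) `ℝ²`. -/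
noncomputable def pd2 (i : Fin 2) (f : (Fin 2 → ℝ) → ℝ) (p : Fin 2 → ℝ) : ℝ :=
  fderiv ℝ f p (Pi.single i 1)

/-- Partial derivative `∂_ν f` of a function on `ℝᴺ`. -/
noncomputable def pdN {N : ℕ} (ν : Fin N) (f : (Fin N → ℝ) → ℝ) (p : Fin N → ℝ) : ℝ :=
  fderiv ℝ f p (Pi.single ν 1)

/-- Christoffel symbols `Γ^μ_{αβ} = (1/2)·g^{νμ}·(∂_β g_{να} + ∂_α g_{βν} − ∂_ν g_{αβ})`
of the metric `g` on `ℝᴺ`. -/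
noncomputable def christoffel {N : ℕ} (g : (Fin N → ℝ) → Matrix (Fin N) (Fin N) ℝ)
    (μ α β : Fin N) (p : Fin N → ℝ) : ℝ :=
  (1/2) * ∑ ν, (g p)⁻¹ ν μ *
    (pdN β (fun q => g q ν α) p + pdN α (fun q => g q β ν) p - pdN ν (fun q => g q α β) p)

/-- The induced metric `γ_{ij} := g_{αβ}(x)·∂_i x^α·∂_j x^β` of an immersion
`x : 𝒪 ⊆ ℝ² → ℝᴺ`. -/
noncomputable def inducedMetric {N : ℕ} (g : (Fin N → ℝ) → Matrix (Fin N) (Fin N) ℝ)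
    (x : (Fin 2 → ℝ) → Fin N → ℝ) (p : Fin 2 → ℝ) : Matrix (Fin 2) (Fin 2) ℝ :=
  Matrix.of fun i j =>
    ∑ α, ∑ β, g (x p) α β * pd2 i (fun y => x y α) p * pd2 j (fun y => x y β) p

/-- The Laplace–Beltrami operator of the induced metric:
`Δf := γ^{−1/2}·∂_j(γ^{1/2}·γ^{ij}·∂_i f)`. -/
noncomputable def lapBel {N : ℕ} (g : (Fin N → ℝ) → Matrix (Fin N) (Fin N) ℝ)
    (x : (Fin 2 → ℝ) → Fin N → ℝ) (f : (Fin 2 → ℝ) → ℝ) (p : Fin 2 → ℝ) : ℝ :=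
  (Real.sqrt (inducedMetric g x p).det)⁻¹ *
    ∑ j, pd2 j (fun q => Real.sqrt (inducedMetric g x q).det *
      ∑ i, (inducedMetric g x q)⁻¹ i j * pd2 i f q) p


/-- The tensor `Q^μ_{αβ} := J^μ_ν·(∂_α J^ν_β + Γ^ν_{ασ}·J^σ_β − Γ^σ_{αβ}·J^ν_σ)`, the
coordinate expression of `Q(X,Y) = J(∇_X J)Y`. -/
noncomputable def Qtensor {N : ℕ} (g J : (Fin N → ℝ) → Matrix (Fin N) (Fin N) ℝ)
    (μ α β : Fin N) (p : Fin N → ℝ) : ℝ :=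
  ∑ ν, J p μ ν * (pdN α (fun q => J q ν β) p
    + ∑ σ, christoffel g ν α σ p * J p σ β
    - ∑ σ, christoffel g σ α β p * J p ν σ)

/-- `x` is a `J`-curve in these coordinates: for `i = 1,2` the vector `J(x)·∂_i x` lies in
the real span of `∂₁x` and `∂₂x` at every point of `𝒪`. -/
def IsJCurveCoord {N : ℕ} (J : (Fin N → ℝ) → Matrix (Fin N) (Fin N) ℝ)
    (x : (Fin 2 → ℝ) → Fin N → ℝ) (𝒪 : Set (Fin 2 → ℝ)) : Prop :=
  ∀ p ∈ 𝒪, ∀ i : Fin 2, ∃ a b : ℝ, ∀ μ : Fin N,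
    (∑ ν, J (x p) μ ν * pd2 i (fun y => x y ν) p)
      = a * pd2 0 (fun y => x y μ) p + b * pd2 1 (fun y => x y μ) p


lemma clm_apply_eq_sum {k : ℕ} (L : (Fin k → ℝ) →L[ℝ] ℝ) (w : Fin k → ℝ) :
    L w = ∑ i, w i * L (Pi.single i 1) := by
  have hw : w = ∑ i, w i • (Pi.single i (1:ℝ) : Fin k → ℝ) := by
    nth_rewrite 1 [pi_eq_sum_univ w]
    refine Finset.sum_congr rfl fun i _ => ?_
    congr 1; funext j; simp [Pi.single_apply, eq_comm]
  nth_rewrite 1 [hw]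
  rw [map_sum]
  simp [smul_eq_mul]

lemma pd2_congr_nhds {i : Fin 2} {f g : (Fin 2 → ℝ) → ℝ} {p : Fin 2 → ℝ}
    (h : f =ᶠ[nhds p] g) : pd2 i f p = pd2 i g p := by
  unfold pd2; rw [h.fderiv_eq]

lemma pd2_mul {f g : (Fin 2 → ℝ) → ℝ} {p : Fin 2 → ℝ} (i : Fin 2)
    (hf : DifferentiableAt ℝ f p) (hg : DifferentiableAt ℝ g p) :
    pd2 i (fun y => f y * g y) p = pd2 i f p * g p + f p * pd2 i g p := by
  unfold pd2; rw [fderiv_fun_mul hf hg]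
  simp [smul_eq_mul]; ring

lemma pd2_add {f g : (Fin 2 → ℝ) → ℝ} {p : Fin 2 → ℝ} (i : Fin 2)
    (hf : DifferentiableAt ℝ f p) (hg : DifferentiableAt ℝ g p) :
    pd2 i (fun y => f y + g y) p = pd2 i f p + pd2 i g p := by
  unfold pd2; rw [fderiv_fun_add hf hg]; simp

lemma pd2_sum {ι : Type*} (s : Finset ι) (f : ι → (Fin 2 → ℝ) → ℝ) {p : Fin 2 → ℝ} (i : Fin 2)
    (h : ∀ a ∈ s, DifferentiableAt ℝ (f a) p) :
    pd2 i (fun y => ∑ a ∈ s, f a y) p = ∑ a ∈ s, pd2 i (f a) p := by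
  unfold pd2; rw [fderiv_fun_sum h]; simp

lemma pd2_const (i : Fin 2) (c : ℝ) (p : Fin 2 → ℝ) : pd2 i (fun _ => c) p = 0 := by
  unfold pd2; simp

lemma pd2_coord (i k : Fin 2) (p : Fin 2 → ℝ) :
    pd2 i (fun y : Fin 2 → ℝ => y k) p = (Pi.single i (1:ℝ) : Fin 2 → ℝ) k := by
  unfold pd2
  have : fderiv ℝ (fun y : Fin 2 → ℝ => y k) p
      = (ContinuousLinearMap.proj k : (Fin 2 → ℝ) →L[ℝ] ℝ) :=
    (ContinuousLinearMap.proj k : (Fin 2 → ℝ) →L[ℝ] ℝ).fderiv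
  rw [this]; rfl

lemma pd2_comp {N : ℕ} (x : (Fin 2 → ℝ) → Fin N → ℝ) (h : (Fin N → ℝ) → ℝ) {p : Fin 2 → ℝ}
    (hx : ∀ α, DifferentiableAt ℝ (fun y => x y α) p) (hh : DifferentiableAt ℝ h (x p))
    (i : Fin 2) :
    pd2 i (fun y => h (x y)) p = ∑ α, pdN α h (x p) * pd2 i (fun y => x y α) p := by
  have hX : HasFDerivAt x (ContinuousLinearMap.pi fun α => fderiv ℝ (fun y => x y α) p) p := by
    rw [hasFDerivAt_pi']
    intro α; rw [ContinuousLinearMap.proj_pi]; exact (hx α).hasFDerivAt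
  have hc : HasFDerivAt (fun y => h (x y))
      ((fderiv ℝ h (x p)).comp (ContinuousLinearMap.pi fun α => fderiv ℝ (fun y => x y α) p)) p :=
    hh.hasFDerivAt.comp p hX
  unfold pd2 pdN
  rw [hc.fderiv, ContinuousLinearMap.coe_comp', Function.comp_apply,
    clm_apply_eq_sum (fderiv ℝ h (x p))]
  refine Finset.sum_congr rfl fun α _ => ?_
  rw [ContinuousLinearMap.pi_apply, mul_comm]

lemma pd2_symm {f : (Fin 2 → ℝ) → ℝ} {𝒪 : Set (Fin 2 → ℝ)} (h𝒪 : IsOpen 𝒪) {p : Fin 2 → ℝ}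
    (hp : p ∈ 𝒪) (hf : ContDiffOn ℝ ∞ f 𝒪) (i j : Fin 2) :
    pd2 i (fun y => pd2 j f y) p = pd2 j (fun y => pd2 i f y) p := by
  have hmem : 𝒪 ∈ nhds p := h𝒪.mem_nhds hp
  have hf' : ContDiffOn ℝ ∞ (fderiv ℝ f) 𝒪 := hf.fderiv_of_isOpen h𝒪 (by simp)
  have hd' : DifferentiableAt ℝ (fderiv ℝ f) p :=
    (hf'.contDiffAt hmem).differentiableAt (by simp)
  have hev : ∀ᶠ y in nhds p, HasFDerivAt f (fderiv ℝ f y) y := by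
    filter_upwards [h𝒪.eventually_mem hp] with y hy
    exact ((hf.contDiffAt (h𝒪.mem_nhds hy)).differentiableAt (by simp)).hasFDerivAt
  have hsym := second_derivative_symmetric_of_eventually hev hd'.hasFDerivAt
    (Pi.single i 1) (Pi.single j 1)
  have key : ∀ v w : Fin 2 → ℝ, fderiv ℝ (fun y => fderiv ℝ f y w) p v
      = (fderiv ℝ (fderiv ℝ f) p v) w := by
    intro v w
    rw [fderiv_clm_apply hd' (differentiableAt_const w)]
    simp
  unfold pd2
  rw [key, key, hsym]


/-- **Proposition (graphical quasilinear elliptic system for `J`-curves).**  If the immersed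
`J`-curve `x` is parameterized graphically, `x¹(y¹,y²) = y¹` and `x²(y¹,y²) = y²`, then for
every `μ = 3,…,N` the component `x^μ` satisfies `γ^{ij}·∂_i∂_j x^μ = ℱ^μ`, where
`ℱ^μ := γ^{ij}·∂_i x^α·∂_j x^β·(∂_k x^μ·Γ^k_{αβ}(x) − ∂_k x^μ·Q^k_{αβ}(x) + Q^μ_{αβ}(x)
− Γ^μ_{αβ}(x))`. -/
theorem stmt3 (N : ℕ) (hN : 2 ≤ N)
    (𝒪 : Set (Fin 2 → ℝ)) (h𝒪 : IsOpen 𝒪)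
    (g : (Fin N → ℝ) → Matrix (Fin N) (Fin N) ℝ)
    (hg_smooth : ∀ α β : Fin N, ContDiff ℝ (⊤ : ℕ∞) (fun p => g p α β))
    (hg_posdef : ∀ p, (g p).PosDef)
    (x : (Fin 2 → ℝ) → Fin N → ℝ)
    (hx_smooth : ∀ μ : Fin N, ContDiffOn ℝ (⊤ : ℕ∞) (fun y => x y μ) 𝒪)
    (hx_imm : ∀ p ∈ 𝒪, LinearIndependent ℝ
      ![fun μ => pd2 0 (fun y => x y μ) p, fun μ => pd2 1 (fun y => x y μ) p])
    (n : ℕ) (hNeven : N = 2 * n)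
    (J : (Fin N → ℝ) → Matrix (Fin N) (Fin N) ℝ)
    (hJ_smooth : ∀ α β : Fin N, ContDiff ℝ (⊤ : ℕ∞) (fun p => J p α β))
    (hJ_sq : ∀ p, J p * J p = -1)
    (hJ_orth : ∀ p, ∀ μ ν : Fin N, ∑ α, ∑ β, g p α β * J p α μ * J p β ν = g p μ ν)
    (hJcurve : IsJCurveCoord J x 𝒪)
    (hgraph1 : ∀ y : Fin 2 → ℝ, x y ⟨0, by omega⟩ = y 0)
    (hgraph2 : ∀ y : Fin 2 → ℝ, x y ⟨1, by omega⟩ = y 1) :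
    ∀ p ∈ 𝒪, ∀ μ : Fin N, 2 ≤ (μ : ℕ) →
      ∑ i, ∑ j, (inducedMetric g x p)⁻¹ i j
          * pd2 i (fun q => pd2 j (fun y => x y μ) q) p
        = ∑ i, ∑ j, ∑ α, ∑ β, (inducedMetric g x p)⁻¹ i j
            * pd2 i (fun y => x y α) p * pd2 j (fun y => x y β) p
            * ((∑ k : Fin 2, pd2 k (fun y => x y μ) p
                  * christoffel g (Fin.castLE hN k) α β (x p))
              - (∑ k : Fin 2, pd2 k (fun y => x y μ) p
                  * Qtensor g J (Fin.castLE hN k) α β (x p))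
              + Qtensor g J μ α β (x p) - christoffel g μ α β (x p)) := by
  classical
  intro p hp
  have hmem : 𝒪 ∈ nhds p := h𝒪.mem_nhds hp
  -- abbreviations
  set Gm : Matrix (Fin N) (Fin N) ℝ := g (x p) with hGm
  set Jmm : Matrix (Fin N) (Fin N) ℝ := J (x p) with hJmm
  set uf : Fin 2 → Fin N → (Fin 2 → ℝ) → ℝ := fun i α y => pd2 i (fun y' => x y' α) y with huf
  set u : Fin 2 → Fin N → ℝ := fun i α => pd2 i (fun y' => x y' α) p with hu
  set sd : Fin 2 → Fin 2 → Fin N → ℝ := fun i j α => pd2 i (uf j α) p with hsd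
  set ip : (Fin N → ℝ) → (Fin N → ℝ) → ℝ := fun v w => ∑ α, ∑ β, Gm α β * v α * w β with hip
  set Jv : (Fin N → ℝ) → Fin N → ℝ := fun v μ => ∑ ν, Jmm μ ν * v ν with hJv
  set Γ2 : (Fin N → ℝ) → (Fin N → ℝ) → Fin N → ℝ :=
    fun v w μ => ∑ α, ∑ β, christoffel g μ α β (x p) * v α * w β with hΓ2
  set Qu : Fin 2 → Fin 2 → Fin N → ℝ :=
    fun i j μ => ∑ α, ∑ β, Qtensor g J μ α β (x p) * u i α * u j β with hQu
  set ρ : Fin 2 → Fin 2 → ℝ := fun i j => (inducedMetric g x p)⁻¹ i j with hρ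
  set γmm : Fin 2 → Fin 2 → ℝ := fun i j => inducedMetric g x p i j with hγmm
  set Ff : Fin 2 → Fin N → (Fin 2 → ℝ) → ℝ := fun j ν y => ∑ β, J (x y) ν β * uf j β y with hFf
  set γf : Fin 2 → Fin 2 → (Fin 2 → ℝ) → ℝ :=
    fun i j y => ∑ α, ∑ β, g (x y) α β * uf i α y * uf j β y with hγf
  set bf : Fin 2 → Fin 2 → (Fin 2 → ℝ) → ℝ :=
    fun j l y => ∑ α, ∑ β, g (x y) α β * Ff j α y * uf l β y with hbf
  set df : (Fin 2 → ℝ) → ℝ := fun y => γf 0 0 y * γf 1 1 y - γf 0 1 y * γf 1 0 y with hdf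
  set c0f : Fin 2 → (Fin 2 → ℝ) → ℝ :=
    fun j y => bf j 0 y * γf 1 1 y - bf j 1 y * γf 1 0 y with hc0f
  set c1f : Fin 2 → (Fin 2 → ℝ) → ℝ :=
    fun j y => bf j 1 y * γf 0 0 y - bf j 0 y * γf 0 1 y with hc1f
  -- smoothness facts
  have hxO : ∀ α, ContDiffOn ℝ ∞ (fun y => x y α) 𝒪 := fun α => (hx_smooth α).of_le (by simp)
  have hxvec : ContDiffOn ℝ ∞ x 𝒪 := contDiffOn_pi.mpr hxO
  have hcomp : ∀ h : (Fin N → ℝ) → ℝ, ContDiff ℝ (⊤ : ℕ∞) h →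
      ContDiffOn ℝ ∞ (fun y => h (x y)) 𝒪 :=
    fun h hh => (hh.of_le (by simp)).comp_contDiffOn hxvec
  have dA : ∀ {f : (Fin 2 → ℝ) → ℝ}, ContDiffOn ℝ ∞ f 𝒪 → DifferentiableAt ℝ f p :=
    fun hf => (hf.contDiffAt hmem).differentiableAt (by simp)
  have hufC : ∀ i α, ContDiffOn ℝ ∞ (uf i α) 𝒪 := by
    intro i α
    have h1 : ContDiffOn ℝ ∞ (fderiv ℝ (fun y => x y α)) 𝒪 :=
      (hxO α).fderiv_of_isOpen h𝒪 (by simp)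
    exact h1.clm_apply contDiffOn_const
  have hgxC : ∀ α β, ContDiffOn ℝ ∞ (fun y => g (x y) α β) 𝒪 :=
    fun α β => hcomp _ (hg_smooth α β)
  have hJxC : ∀ α β, ContDiffOn ℝ ∞ (fun y => J (x y) α β) 𝒪 :=
    fun α β => hcomp _ (hJ_smooth α β)
  have hFfC : ∀ j ν, ContDiffOn ℝ ∞ (Ff j ν) 𝒪 := by
    intro j ν
    simp only [hFf]
    exact ContDiffOn.sum fun β _ => (hJxC ν β).mul (hufC j β)
  have hγfC : ∀ i j, ContDiffOn ℝ ∞ (γf i j) 𝒪 := by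
    intro i j
    simp only [hγf]
    exact ContDiffOn.sum fun α _ => ContDiffOn.sum fun β _ =>
      ((hgxC α β).mul (hufC i α)).mul (hufC j β)
  have hbfC : ∀ j l, ContDiffOn ℝ ∞ (bf j l) 𝒪 := by
    intro j l
    simp only [hbf]
    exact ContDiffOn.sum fun α _ => ContDiffOn.sum fun β _ =>
      ((hgxC α β).mul (hFfC j α)).mul (hufC l β)
  have hdfC : ContDiffOn ℝ ∞ df 𝒪 := by
    simp only [hdf]
    exact ((hγfC 0 0).mul (hγfC 1 1)).sub ((hγfC 0 1).mul (hγfC 1 0))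
  have hc0fC : ∀ j, ContDiffOn ℝ ∞ (c0f j) 𝒪 := by
    intro j; simp only [hc0f]
    exact ((hbfC j 0).mul (hγfC 1 1)).sub ((hbfC j 1).mul (hγfC 1 0))
  have hc1fC : ∀ j, ContDiffOn ℝ ∞ (c1f j) 𝒪 := by
    intro j; simp only [hc1f]
    exact ((hbfC j 1).mul (hγfC 0 0)).sub ((hbfC j 0).mul (hγfC 0 1))
  have hxd : ∀ α, DifferentiableAt ℝ (fun y => x y α) p := fun α => dA (hxO α)
  -- basic pointwise algebra
  have hgsym : ∀ r : Fin N → ℝ, ∀ α β, g r α β = g r β α := by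
    intro r α β
    have := (hg_posdef r).isHermitian.apply α β
    simpa using this.symm
  have hΓsym : ∀ (μ α β : Fin N) (r : Fin N → ℝ),
      christoffel g μ α β r = christoffel g μ β α r := by
    intro μ α β r
    unfold christoffel
    congr 1
    refine Finset.sum_congr rfl fun ν _ => ?_
    have e1 : (fun q => g q ν α) = fun q => g q α ν := by funext r'; exact hgsym r' ν α
    have e2 : (fun q => g q β ν) = fun q => g q ν β := by funext r'; exact hgsym r' β ν
    have e3 : (fun q => g q α β) = fun q => g q β α := by funext r'; exact hgsym r' α β
    rw [e1, e2, e3]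
    ring
  -- matrix bridge for ip
  have hipmat : ∀ v w, ip v w = v ⬝ᵥ (Gm *ᵥ w) := by
    intro v w
    simp only [hip, dotProduct, Matrix.mulVec]
    refine Finset.sum_congr rfl fun α _ => ?_
    rw [Finset.mul_sum]
    refine Finset.sum_congr rfl fun β _ => ?_
    ring
  have hJvmat : ∀ v, Jv v = Jmm *ᵥ v := by
    intro v; funext μ
    simp [hJv, Matrix.mulVec, dotProduct]
  have hGsymm : Gm.IsSymm := by
    rw [Matrix.IsSymm]
    ext α β
    simp only [Matrix.transpose_apply]
    exact hgsym (x p) β α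
  have hipsym : ∀ v w, ip v w = ip w v := by
    intro v w
    rw [hipmat, hipmat, Matrix.dotProduct_mulVec, ← Matrix.mulVec_transpose,
      hGsymm.eq, dotProduct_comm]
  have horthm : Jmmᵀ * Gm * Jmm = Gm := by
    ext μ ν
    have h := hJ_orth (x p) μ ν
    rw [← hGm, ← hJmm] at h
    have lhs : (Jmmᵀ * Gm * Jmm) μ ν = ∑ β, ∑ α, Gm α β * Jmm α μ * Jmm β ν := by
      rw [Matrix.mul_apply]
      refine Finset.sum_congr rfl fun β _ => ?_
      rw [Matrix.mul_apply, Finset.sum_mul]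
      refine Finset.sum_congr rfl fun α _ => ?_
      rw [Matrix.transpose_apply]; ring
    rw [lhs, Finset.sum_comm, h]
  have horth : ∀ v w, ip (Jv v) (Jv w) = ip v w := by
    intro v w
    rw [hipmat, hipmat, hJvmat, hJvmat, Matrix.mulVec_mulVec, Matrix.dotProduct_mulVec,
      ← Matrix.vecMul_transpose, Matrix.vecMul_vecMul, ← Matrix.mul_assoc, horthm,
      ← Matrix.dotProduct_mulVec]
  have hJJv : ∀ v, Jv (Jv v) = fun μ => -(v μ) := by
    intro v
    rw [hJvmat, hJvmat, Matrix.mulVec_mulVec, hJ_sq (x p), Matrix.neg_mulVec,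
      Matrix.one_mulVec]
    funext μ
    simp
  have hskew : ∀ v w, ip (Jv v) w = - ip v (Jv w) := by
    intro v w
    have h1 : ip (Jv v) (Jv (Jv w)) = ip v (Jv w) := horth v (Jv w)
    rw [hJJv w] at h1
    have h2 : ip (Jv v) (fun μ => -(w μ)) = - ip (Jv v) w := by
      simp [hip, mul_neg, Finset.sum_neg_distrib]
    rw [h2] at h1
    linarith
  -- linearity helpers for ip
  have hipadd : ∀ v w z : Fin N → ℝ, ip (fun ν => v ν + w ν) z = ip v z + ip w z := by
    intro v w z
    simp only [hip]
    rw [← Finset.sum_add_distrib]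
    refine Finset.sum_congr rfl fun α _ => ?_
    rw [← Finset.sum_add_distrib]
    refine Finset.sum_congr rfl fun β _ => ?_
    ring
  have hipsmul : ∀ (a : ℝ) (v z : Fin N → ℝ), ip (fun ν => a * v ν) z = a * ip v z := by
    intro a v z
    simp only [hip, Finset.mul_sum]
    refine Finset.sum_congr rfl fun α _ => Finset.sum_congr rfl fun β _ => ?_
    ring
  have hipneg : ∀ v z : Fin N → ℝ, ip (fun ν => -(v ν)) z = - ip v z := by
    intro v z
    have := hipsmul (-1) v z
    simp only [neg_one_mul] at this
    exact this
  -- J-curve condition, pointwise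
  have hJCp : ∀ y ∈ 𝒪, ∀ j : Fin 2, ∃ a b : ℝ, ∀ ν : Fin N,
      Ff j ν y = a * uf 0 ν y + b * uf 1 ν y := by
    intro y hy j
    obtain ⟨a, b, hab⟩ := hJcurve y hy j
    exact ⟨a, b, fun ν => by simpa [hFf, huf] using hab ν⟩
  -- Cramer identity on 𝒪
  have hbval : ∀ y ∈ 𝒪, ∀ (j : Fin 2) (a b : ℝ),
      (∀ ν, Ff j ν y = a * uf 0 ν y + b * uf 1 ν y) →
      ∀ l, bf j l y = a * γf 0 l y + b * γf 1 l y := by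
    intro y hy j a b hab l
    simp only [hbf, hγf]
    rw [Finset.mul_sum, Finset.mul_sum, ← Finset.sum_add_distrib]
    refine Finset.sum_congr rfl fun α _ => ?_
    rw [Finset.mul_sum, Finset.mul_sum, ← Finset.sum_add_distrib]
    refine Finset.sum_congr rfl fun β _ => ?_
    rw [hab α]
    ring
  have hCram : ∀ y ∈ 𝒪, ∀ (j : Fin 2) (ν : Fin N),
      df y * Ff j ν y = c0f j y * uf 0 ν y + c1f j y * uf 1 ν y := by
    intro y hy j ν
    obtain ⟨a, b, hab⟩ := hJCp y hy j
    have hb0 := hbval y hy j a b hab 0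
    have hb1 := hbval y hy j a b hab 1
    simp only [hdf, hc0f, hc1f, hb0, hb1, hab ν]
    ring
  -- induced metric at p
  have hγfp : ∀ i j, γf i j p = inducedMetric g x p i j := by
    intro i j
    simp only [hγf, huf, inducedMetric, Matrix.of_apply]
  have hγip : ∀ i j, inducedMetric g x p i j = ip (u i) (u j) := by
    intro i j
    simp only [inducedMetric, Matrix.of_apply, hip, hu, hGm]
  -- linear independence
  have hlin : ∀ c : Fin 2 → ℝ, (∀ α, c 0 * u 0 α + c 1 * u 1 α = 0) → c = 0 := by
    intro c hc
    have hli := hx_imm p hp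
    rw [Fintype.linearIndependent_iff] at hli
    have hz : ∑ i : Fin 2, c i • (![fun μ => pd2 0 (fun y => x y μ) p,
        fun μ => pd2 1 (fun y => x y μ) p] : Fin 2 → Fin N → ℝ) i = 0 := by
      funext α
      have h := hc α
      simp only [hu] at h
      simp only [Finset.sum_apply, Fin.sum_univ_two, Matrix.cons_val_zero, Matrix.cons_val_one,
        Matrix.head_cons, Pi.smul_apply, smul_eq_mul, Pi.zero_apply]
      exact h
    funext i
    exact hli c hz i
  -- positivity
  have hippos : ∀ v : Fin N → ℝ, v ≠ 0 → 0 < ip v v := by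
    intro v hv
    have h := (hg_posdef (x p)).dotProduct_mulVec_pos hv
    rw [hipmat]
    simpa [hGm] using h
  have hγpd : (inducedMetric g x p).PosDef := by
    apply Matrix.PosDef.of_dotProduct_mulVec_pos
    · ext i j
      simp only [Matrix.conjTranspose_apply, star_trivial]
      rw [hγip, hγip, hipsym]
    · intro c hc
      set w : Fin N → ℝ := fun α => c 0 * u 0 α + c 1 * u 1 α with hw
      have hwne : w ≠ 0 := by
        intro h0
        apply hc
        apply hlin c
        intro α
        have := congrFun h0 α
        simpa [hw] using this
      have e1 : ∀ z, ip w z = c 0 * ip (u 0) z + c 1 * ip (u 1) z := by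
        intro z
        calc ip w z = ip (fun ν => c 0 * u 0 ν) z + ip (fun ν => c 1 * u 1 ν) z :=
              hipadd _ _ z
          _ = c 0 * ip (u 0) z + c 1 * ip (u 1) z := by rw [hipsmul, hipsmul]
      have e2 : ip w w = c 0 * (c 0 * ip (u 0) (u 0) + c 1 * ip (u 1) (u 0))
          + c 1 * (c 0 * ip (u 0) (u 1) + c 1 * ip (u 1) (u 1)) := by
        rw [e1 w, hipsym (u 0) w, hipsym (u 1) w, e1 (u 0), e1 (u 1)]
      have key : dotProduct (star c) ((inducedMetric g x p) *ᵥ c) = ip w w := by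
        simp only [dotProduct, Matrix.mulVec, Fin.sum_univ_two, star_trivial,
          Pi.star_apply, hγip, e2]
        ring
      rw [key]
      exact hippos w hwne
  have hdet0 : (inducedMetric g x p).det ≠ 0 := ne_of_gt hγpd.det_pos
  have hdfne : df p ≠ 0 := by
    have hdfp : df p = (inducedMetric g x p).det := by
      rw [Matrix.det_fin_two]
      simp only [hdf, hγfp]
    rw [hdfp]
    exact hdet0
  have hinv : ∀ i k, ρ i 0 * γmm 0 k + ρ i 1 * γmm 1 k = if i = k then (1:ℝ) else 0 := by
    intro i k
    have h := Matrix.nonsing_inv_mul (inducedMetric g x p) (isUnit_iff_ne_zero.mpr hdet0)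
    have h2 := congrFun (congrFun h i) k
    rw [Matrix.mul_apply, Fin.sum_univ_two] at h2
    simpa [hρ, hγmm, Matrix.one_apply] using h2
  have hγmsym : γmm 0 1 = γmm 1 0 := by
    simp only [hγmm]
    rw [hγip, hγip, hipsym]
  have hρsym : ρ 0 1 = ρ 1 0 := by
    have h := Matrix.transpose_nonsing_inv (inducedMetric g x p)
    have hsymγ : (inducedMetric g x p)ᵀ = inducedMetric g x p := by
      ext i j
      rw [Matrix.transpose_apply, hγip, hγip, hipsym]
    have h2 : ((inducedMetric g x p)⁻¹)ᵀ = (inducedMetric g x p)⁻¹ := by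
      rw [h, hsymγ]
    simp only [hρ]
    exact congrFun (congrFun h2.symm 0) 1
  -- symmetry of second derivatives and of Γ2
  have hsdsym : ∀ i j α, sd i j α = sd j i α := by
    intro i j α
    simp only [hsd, huf]
    exact pd2_symm h𝒪 hp (hxO α) i j
  have hΓ2sym : ∀ v w μ, Γ2 v w μ = Γ2 w v μ := by
    intro v w μ
    simp only [hΓ2]
    rw [Finset.sum_comm]
    refine Finset.sum_congr rfl fun α _ => Finset.sum_congr rfl fun β _ => ?_
    rw [hΓsym]
    ring
  have hΓ2lin : ∀ (v : Fin N → ℝ) (a b : ℝ) (w z : Fin N → ℝ) (μ : Fin N),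
      Γ2 v (fun σ => a * w σ + b * z σ) μ = a * Γ2 v w μ + b * Γ2 v z μ := by
    intro v a b w z μ
    simp only [hΓ2, Finset.mul_sum]
    rw [← Finset.sum_add_distrib]
    refine Finset.sum_congr rfl fun α _ => ?_
    rw [← Finset.sum_add_distrib]
    refine Finset.sum_congr rfl fun β _ => ?_
    ring
  -- graphical parametrization
  have hxco : ∀ k : Fin 2, (fun y => x y (Fin.castLE hN k)) = fun y : Fin 2 → ℝ => y k := by
    intro k
    funext y
    fin_cases k
    · exact hgraph1 y
    · exact hgraph2 y
  have hugraph : ∀ l k : Fin 2, u l (Fin.castLE hN k) = if l = k then (1:ℝ) else 0 := by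
    intro l k
    simp only [hu]
    rw [hxco k, pd2_coord, Pi.single_apply]
    simp [eq_comm]
  have hsgraph : ∀ i j k : Fin 2, sd i j (Fin.castLE hN k) = 0 := by
    intro i j k
    simp only [hsd, huf]
    have h1 : (fun y => pd2 j (fun y' => x y' (Fin.castLE hN k)) y)
        = fun _ : Fin 2 → ℝ => (Pi.single j 1 : Fin 2 → ℝ) k := by
      funext y
      rw [hxco k, pd2_coord]
    rw [h1, pd2_const]
  -- chain rule for J entries
  have hJchain : ∀ (i : Fin 2) (ν β : Fin N),
      pd2 i (fun y => J (x y) ν β) p = ∑ α, pdN α (fun r => J r ν β) (x p) * u i α := by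
    intro i ν β
    have h := pd2_comp x (fun r => J r ν β) hxd
      (((hJ_smooth ν β).differentiable (by simp)).differentiableAt) i
    simpa [hu] using h
  set Pf : Fin 2 → Fin 2 → Fin N → ℝ :=
    fun i j ν => ∑ β, pd2 i (fun y => J (x y) ν β) p * u j β with hPf
  -- derivative of Ff at p
  have hdFf : ∀ (i j : Fin 2) (ν : Fin N),
      pd2 i (Ff j ν) p = Pf i j ν + ∑ β, J (x p) ν β * sd i j β := by
    intro i j ν
    have h1 : pd2 i (Ff j ν) p = ∑ β, pd2 i (fun y => J (x y) ν β * uf j β y) p := by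
      simp only [hFf]
      exact pd2_sum Finset.univ _ i (fun β _ => ((dA (hJxC ν β)).mul (dA (hufC j β))))
    have h2 : ∀ β : Fin N, pd2 i (fun y => J (x y) ν β * uf j β y) p
        = pd2 i (fun y => J (x y) ν β) p * u j β + J (x p) ν β * sd i j β := by
      intro β
      rw [pd2_mul i (dA (hJxC ν β)) (dA (hufC j β))]
    rw [h1, Finset.sum_congr rfl fun β _ => h2 β, Finset.sum_add_distrib]
  -- J*J entries
  have hJJm : ∀ μ' σ : Fin N,
      (∑ ν, J (x p) μ' ν * J (x p) ν σ) = -(if μ' = σ then (1:ℝ) else 0) := by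
    intro μ' σ
    have h := congrFun (congrFun (hJ_sq (x p)) μ') σ
    rw [Matrix.mul_apply] at h
    rw [h]
    simp [Matrix.neg_apply, Matrix.one_apply]
  -- expansion of the Q-tensor contraction
  have hQexp : ∀ (i j : Fin 2) (μ : Fin N),
      Qu i j μ = Jv (fun ν => Pf i j ν + Γ2 (u i) (fun σ => Ff j σ p) ν) μ
        + Γ2 (u i) (u j) μ := by
    intro i j μ
    have hFfp : ∀ σ : Fin N, Ff j σ p = ∑ β, J (x p) σ β * u j β := fun σ => rfl
    have hL1 : ∀ ν : Fin N, (∑ β, pd2 i (fun y => J (x y) ν β) p * u j β)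
        = ∑ α, ∑ β, pdN α (fun r => J r ν β) (x p) * u i α * u j β := by
      intro ν
      calc (∑ β, pd2 i (fun y => J (x y) ν β) p * u j β)
          = ∑ β, ∑ α, pdN α (fun r => J r ν β) (x p) * u i α * u j β := by
            refine Finset.sum_congr rfl fun β _ => ?_
            rw [hJchain i ν β, Finset.sum_mul]
        _ = ∑ α, ∑ β, pdN α (fun r => J r ν β) (x p) * u i α * u j β := Finset.sum_comm
    have hpull2 : ∀ (c d e : ℝ) (f h : Fin N → ℝ),
        c * (∑ σ, f σ * h σ) * d * e = ∑ σ, c * f σ * h σ * d * e := by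
      intro c d e f h
      rw [Finset.mul_sum, Finset.sum_mul, Finset.sum_mul]
      exact Finset.sum_congr rfl fun σ _ => by ring
    have stepA : ∀ α β : Fin N,
        (∑ ν, J (x p) μ ν * (pdN α (fun r => J r ν β) (x p)
          + (∑ σ, christoffel g ν α σ (x p) * J (x p) σ β)
          - ∑ σ, christoffel g σ α β (x p) * J (x p) ν σ)) * u i α * u j β
        = ∑ ν, (J (x p) μ ν * pdN α (fun r => J r ν β) (x p) * u i α * u j β
            + (∑ σ, J (x p) μ ν * christoffel g ν α σ (x p) * J (x p) σ β * u i α * u j β)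
            - ∑ σ, J (x p) μ ν * christoffel g σ α β (x p) * J (x p) ν σ * u i α * u j β) := by
      intro α β
      rw [Finset.sum_mul, Finset.sum_mul]
      refine Finset.sum_congr rfl fun ν _ => ?_
      have expand : J (x p) μ ν * (pdN α (fun r => J r ν β) (x p)
          + (∑ σ, christoffel g ν α σ (x p) * J (x p) σ β)
          - ∑ σ, christoffel g σ α β (x p) * J (x p) ν σ) * u i α * u j β
        = J (x p) μ ν * pdN α (fun r => J r ν β) (x p) * u i α * u j β
          + J (x p) μ ν * (∑ σ, christoffel g ν α σ (x p) * J (x p) σ β) * u i α * u j β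
          - J (x p) μ ν * (∑ σ, christoffel g σ α β (x p) * J (x p) ν σ) * u i α * u j β := by
        ring
      rw [expand, hpull2, hpull2]
    -- split the triple sum into three pieces
    have stepB : Qu i j μ
        = (∑ α, ∑ β, ∑ ν, J (x p) μ ν * pdN α (fun r => J r ν β) (x p) * u i α * u j β)
          + (∑ α, ∑ β, ∑ ν, ∑ σ,
              J (x p) μ ν * christoffel g ν α σ (x p) * J (x p) σ β * u i α * u j β)
          - ∑ α, ∑ β, ∑ ν, ∑ σ,
              J (x p) μ ν * christoffel g σ α β (x p) * J (x p) ν σ * u i α * u j β := by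
      simp only [hQu, Qtensor]
      rw [Finset.sum_congr rfl fun α _ => Finset.sum_congr rfl fun β _ => stepA α β]
      rw [← Finset.sum_add_distrib, ← Finset.sum_sub_distrib]
      refine Finset.sum_congr rfl fun α _ => ?_
      rw [← Finset.sum_add_distrib, ← Finset.sum_sub_distrib]
      refine Finset.sum_congr rfl fun β _ => ?_
      rw [← Finset.sum_add_distrib, ← Finset.sum_sub_distrib]
    -- piece 1
    have hB1 : (∑ α, ∑ β, ∑ ν, J (x p) μ ν * pdN α (fun r => J r ν β) (x p) * u i α * u j β)
        = ∑ ν, J (x p) μ ν * (∑ α, ∑ β, pdN α (fun r => J r ν β) (x p) * u i α * u j β) := by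
      calc (∑ α, ∑ β, ∑ ν, J (x p) μ ν * pdN α (fun r => J r ν β) (x p) * u i α * u j β)
          = ∑ α, ∑ ν, ∑ β, J (x p) μ ν * pdN α (fun r => J r ν β) (x p) * u i α * u j β := by
            exact Finset.sum_congr rfl fun α _ => Finset.sum_comm
        _ = ∑ ν, ∑ α, ∑ β, J (x p) μ ν * pdN α (fun r => J r ν β) (x p) * u i α * u j β :=
            Finset.sum_comm
        _ = ∑ ν, J (x p) μ ν * (∑ α, ∑ β, pdN α (fun r => J r ν β) (x p) * u i α * u j β) := by
            refine Finset.sum_congr rfl fun ν _ => ?_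
            rw [Finset.mul_sum]
            refine Finset.sum_congr rfl fun α _ => ?_
            rw [Finset.mul_sum]
            exact Finset.sum_congr rfl fun β _ => by ring
    -- piece 2
    have hB2 : (∑ α, ∑ β, ∑ ν, ∑ σ,
          J (x p) μ ν * christoffel g ν α σ (x p) * J (x p) σ β * u i α * u j β)
        = ∑ ν, J (x p) μ ν *
            (∑ α, ∑ σ, christoffel g ν α σ (x p) * u i α * (∑ β, J (x p) σ β * u j β)) := by
      calc (∑ α, ∑ β, ∑ ν, ∑ σ,
            J (x p) μ ν * christoffel g ν α σ (x p) * J (x p) σ β * u i α * u j β)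
          = ∑ α, ∑ ν, ∑ β, ∑ σ,
              J (x p) μ ν * christoffel g ν α σ (x p) * J (x p) σ β * u i α * u j β := by
            exact Finset.sum_congr rfl fun α _ => Finset.sum_comm
        _ = ∑ ν, ∑ α, ∑ β, ∑ σ,
              J (x p) μ ν * christoffel g ν α σ (x p) * J (x p) σ β * u i α * u j β :=
            Finset.sum_comm
        _ = ∑ ν, ∑ α, ∑ σ, ∑ β,
              J (x p) μ ν * christoffel g ν α σ (x p) * J (x p) σ β * u i α * u j β := by
            exact Finset.sum_congr rfl fun ν _ => Finset.sum_congr rfl fun α _ =>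
              Finset.sum_comm
        _ = ∑ ν, J (x p) μ ν *
              (∑ α, ∑ σ, christoffel g ν α σ (x p) * u i α * (∑ β, J (x p) σ β * u j β)) := by
            refine Finset.sum_congr rfl fun ν _ => ?_
            rw [Finset.mul_sum]
            refine Finset.sum_congr rfl fun α _ => ?_
            rw [Finset.mul_sum]
            refine Finset.sum_congr rfl fun σ _ => ?_
            rw [Finset.mul_sum, Finset.mul_sum]
            exact Finset.sum_congr rfl fun β _ => by ring
    -- piece 3
    have hB3 : (∑ α, ∑ β, ∑ ν, ∑ σ,
          J (x p) μ ν * christoffel g σ α β (x p) * J (x p) ν σ * u i α * u j β)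
        = -(∑ α, ∑ β, christoffel g μ α β (x p) * u i α * u j β) := by
      have hinner : ∀ α β : Fin N, (∑ ν, ∑ σ,
            J (x p) μ ν * christoffel g σ α β (x p) * J (x p) ν σ * u i α * u j β)
          = -(christoffel g μ α β (x p) * u i α * u j β) := by
        intro α β
        rw [Finset.sum_comm]
        have hσ : ∀ σ : Fin N, (∑ ν,
              J (x p) μ ν * christoffel g σ α β (x p) * J (x p) ν σ * u i α * u j β)
            = (∑ ν, J (x p) μ ν * J (x p) ν σ) * christoffel g σ α β (x p)
                * u i α * u j β := by
          intro σ
          rw [Finset.sum_mul, Finset.sum_mul, Finset.sum_mul]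
          exact Finset.sum_congr rfl fun ν _ => by ring
        rw [Finset.sum_congr rfl fun σ _ => hσ σ]
        simp only [hJJm]
        simp [ite_mul, neg_mul, zero_mul, one_mul, Finset.sum_ite_eq]
      rw [Finset.sum_congr rfl fun α _ => Finset.sum_congr rfl fun β _ => hinner α β]
      simp [Finset.sum_neg_distrib]
    -- assemble
    rw [stepB, hB1, hB2, hB3]
    simp only [hJv, hΓ2, hPf, hJmm, hL1, hFfp]
    rw [sub_neg_eq_add]
    congr 1
    rw [← Finset.sum_add_distrib]
    refine Finset.sum_congr rfl fun ν _ => ?_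
    ring
  -- B - Q = -J(dF + Gamma(u,F))
  have hBQ : ∀ (i j : Fin 2) (μ : Fin N),
      sd i j μ + Γ2 (u i) (u j) μ - Qu i j μ
        = - Jv (fun ν => pd2 i (Ff j ν) p + Γ2 (u i) (fun σ => Ff j σ p) ν) μ := by
    intro i j μ
    rw [hQexp i j μ]
    have h1 : (fun ν => pd2 i (Ff j ν) p + Γ2 (u i) (fun σ => Ff j σ p) ν)
        = fun ν => (Pf i j ν + Γ2 (u i) (fun σ => Ff j σ p) ν)
            + (∑ β, J (x p) ν β * sd i j β) := by
      funext ν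
      rw [hdFf i j ν]
      ring
    rw [h1]
    have h2 : ∀ (w z : Fin N → ℝ) (μ' : Fin N),
        Jv (fun ν => w ν + z ν) μ' = Jv w μ' + Jv z μ' := by
      intro w z μ'
      simp only [hJv]
      rw [← Finset.sum_add_distrib]
      exact Finset.sum_congr rfl fun ν _ => by ring
    simp only [h2]
    have h3 : Jv (fun ν => ∑ β, J (x p) ν β * sd i j β) μ = - sd i j μ := by
      have h4 : Jv (fun ν => ∑ β, J (x p) ν β * sd i j β) μ = Jv (Jv (sd i j)) μ := by
        simp only [hJv, hJmm]
      rw [h4, hJJv (sd i j)]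
    rw [h3]
    ring
  -- differentiated Cramer identity at p
  have hD : ∀ (i j : Fin 2) (ν : Fin N),
      pd2 i df p * Ff j ν p + df p * pd2 i (Ff j ν) p
        = pd2 i (c0f j) p * u 0 ν + c0f j p * sd i 0 ν
          + (pd2 i (c1f j) p * u 1 ν + c1f j p * sd i 1 ν) := by
    intro i j ν
    have hEq : (fun y => df y * Ff j ν y)
        =ᶠ[nhds p] fun y => c0f j y * uf 0 ν y + c1f j y * uf 1 ν y := by
      filter_upwards [hmem] with y hy
      exact hCram y hy j ν
    have h1 := pd2_congr_nhds (i := i) hEq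
    rw [pd2_mul i (dA hdfC) (dA (hFfC j ν))] at h1
    rw [pd2_add i ((dA (hc0fC j)).fun_mul (dA (hufC 0 ν)))
      ((dA (hc1fC j)).fun_mul (dA (hufC 1 ν)))] at h1
    rw [pd2_mul i (dA (hc0fC j)) (dA (hufC 0 ν)),
      pd2_mul i (dA (hc1fC j)) (dA (hufC 1 ν))] at h1
    exact h1
  -- J maps u to F at p
  have hJu : ∀ l : Fin 2, Jv (u l) = fun ν => Ff l ν p := by
    intro l
    funext ν
    simp only [hJv, hJmm, hFf, huf, hu]
  have hbip : ∀ j l : Fin 2, bf j l p = ip (fun ν => Ff j ν p) (u l) := fun j l => rfl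
  have hbanti : ∀ j l : Fin 2, bf j l p = - bf l j p := by
    intro j l
    calc bf j l p = ip (Jv (u j)) (u l) := by rw [hbip j l, hJu j]
      _ = - ip (u j) (Jv (u l)) := hskew _ _
      _ = - ip (Jv (u l)) (u j) := by rw [hipsym]
      _ = - bf l j p := by rw [hbip l j, hJu l]
  -- the key tangency computation
  have hKey : ∀ nv : Fin N → ℝ, (∀ l : Fin 2, ip nv (u l) = 0) →
      (∑ i, ∑ j, ρ i j * ip (fun μ => sd i j μ + Γ2 (u i) (u j) μ - Qu i j μ) nv) = 0 := by
    intro nv hnv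
    have hnvF : ∀ l : Fin 2, ip nv (fun ν => Ff l ν p) = 0 := by
      intro l
      obtain ⟨a, b, hab⟩ := hJCp p hp l
      have hfun : (fun ν => Ff l ν p) = fun ν => a * u 0 ν + b * u 1 ν := by
        funext ν; exact hab ν
      rw [hfun, hipsym]
      calc ip (fun ν => a * u 0 ν + b * u 1 ν) nv
          = ip (fun ν => a * u 0 ν) nv + ip (fun ν => b * u 1 ν) nv := hipadd _ _ nv
        _ = a * ip (u 0) nv + b * ip (u 1) nv := by rw [hipsmul, hipsmul]
        _ = 0 := by rw [hipsym (u 0) nv, hipsym (u 1) nv, hnv 0, hnv 1]; ring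
    have hmu : ∀ l : Fin 2, ip (Jv nv) (u l) = 0 := by
      intro l
      calc ip (Jv nv) (u l) = - ip nv (Jv (u l)) := hskew _ _
        _ = - ip nv (fun ν => Ff l ν p) := by rw [hJu l]
        _ = 0 := by rw [hnvF l]; ring
    have hum : ∀ l : Fin 2, ip (u l) (Jv nv) = 0 := by
      intro l
      rw [hipsym]
      exact hmu l
    have hFm : ∀ j : Fin 2, ip (fun ν => Ff j ν p) (Jv nv) = 0 := by
      intro j
      rw [← hJu j, horth, hipsym]
      exact hnv j
    have hC2 : ∀ i j : Fin 2, df p * ip (fun ν => pd2 i (Ff j ν) p) (Jv nv)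
        = c0f j p * ip (sd i 0) (Jv nv) + c1f j p * ip (sd i 1) (Jv nv) := by
      intro i j
      have hfun : (fun ν => pd2 i df p * Ff j ν p + df p * pd2 i (Ff j ν) p)
          = fun ν => (pd2 i (c0f j) p * u 0 ν + c0f j p * sd i 0 ν)
              + (pd2 i (c1f j) p * u 1 ν + c1f j p * sd i 1 ν) := by
        funext ν; exact hD i j ν
      have h2 := congrArg (fun v => ip v (Jv nv)) hfun
      rw [hipadd, hipadd, hipadd, hipadd, hipsmul, hipsmul, hipsmul, hipsmul,
        hipsmul, hipsmul] at h2
      rw [hFm j, hum 0, hum 1] at h2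
      linarith [h2]
    have hΓm : ∀ i j : Fin 2, df p * ip (fun ν => Γ2 (u i) (fun σ => Ff j σ p) ν) (Jv nv)
        = c0f j p * ip (fun ν => Γ2 (u i) (u 0) ν) (Jv nv)
          + c1f j p * ip (fun ν => Γ2 (u i) (u 1) ν) (Jv nv) := by
      intro i j
      have hfun : (fun σ => df p * Ff j σ p) = fun σ => c0f j p * u 0 σ + c1f j p * u 1 σ := by
        funext σ; exact hCram p hp j σ
      have h1 : ∀ ν, df p * Γ2 (u i) (fun σ => Ff j σ p) ν
          = c0f j p * Γ2 (u i) (u 0) ν + c1f j p * Γ2 (u i) (u 1) ν := by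
        intro ν
        have h2 : Γ2 (u i) (fun σ => df p * Ff j σ p) ν
            = c0f j p * Γ2 (u i) (u 0) ν + c1f j p * Γ2 (u i) (u 1) ν := by
          rw [hfun]
          exact hΓ2lin (u i) (c0f j p) (c1f j p) (u 0) (u 1) ν
        rw [← h2]
        simp only [hΓ2, Finset.mul_sum]
        refine Finset.sum_congr rfl fun α _ => ?_
        exact Finset.sum_congr rfl fun β _ => by ring
      have h3 : ip (fun ν => df p * Γ2 (u i) (fun σ => Ff j σ p) ν) (Jv nv)
          = ip (fun ν => c0f j p * Γ2 (u i) (u 0) ν + c1f j p * Γ2 (u i) (u 1) ν) (Jv nv) :=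
        congrArg (fun v => ip v (Jv nv)) (funext h1)
      rw [hipsmul] at h3
      rw [hipadd, hipsmul, hipsmul] at h3
      exact h3
    have hmain : ∀ i j : Fin 2,
        df p * ip (fun μ => sd i j μ + Γ2 (u i) (u j) μ - Qu i j μ) nv
          = c0f j p * (ip (sd i 0) (Jv nv) + ip (fun ν => Γ2 (u i) (u 0) ν) (Jv nv))
            + c1f j p * (ip (sd i 1) (Jv nv) + ip (fun ν => Γ2 (u i) (u 1) ν) (Jv nv)) := by
      intro i j
      have h2 : (fun μ => sd i j μ + Γ2 (u i) (u j) μ - Qu i j μ)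
          = fun μ => - Jv (fun ν => pd2 i (Ff j ν) p
              + Γ2 (u i) (fun σ => Ff j σ p) ν) μ := by
        funext μ; exact hBQ i j μ
      have h1 : ip (fun μ => sd i j μ + Γ2 (u i) (u j) μ - Qu i j μ) nv
          = ip (fun ν => pd2 i (Ff j ν) p + Γ2 (u i) (fun σ => Ff j σ p) ν) (Jv nv) := by
        rw [h2, hipneg, hskew]
        ring
      rw [h1, hipadd, mul_add, hC2 i j, hΓm i j]
      ring
    -- scalar assembly
    have hb00 : bf 0 0 p = 0 := by have := hbanti 0 0; linarith
    have hb11 : bf 1 1 p = 0 := by have := hbanti 1 1; linarith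
    have hb01 : bf 0 1 p = - bf 1 0 p := hbanti 0 1
    have hc0v : ∀ j, c0f j p = bf j 0 p * inducedMetric g x p 1 1
        - bf j 1 p * inducedMetric g x p 1 0 := by
      intro j; simp only [hc0f, hγfp]
    have hc1v : ∀ j, c1f j p = bf j 1 p * inducedMetric g x p 0 0
        - bf j 0 p * inducedMetric g x p 0 1 := by
      intro j; simp only [hc1f, hγfp]
    have hi00 : ρ 0 0 * γmm 0 0 + ρ 0 1 * γmm 1 0 = 1 := by simpa using hinv 0 0
    have hi01 : ρ 0 0 * γmm 0 1 + ρ 0 1 * γmm 1 1 = 0 := by simpa using hinv 0 1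
    have hi10 : ρ 1 0 * γmm 0 0 + ρ 1 1 * γmm 1 0 = 0 := by simpa using hinv 1 0
    have hi11 : ρ 1 0 * γmm 0 1 + ρ 1 1 * γmm 1 1 = 1 := by simpa using hinv 1 1
    have hYsym : ip (sd 0 1) (Jv nv) + ip (fun ν => Γ2 (u 0) (u 1) ν) (Jv nv)
        = ip (sd 1 0) (Jv nv) + ip (fun ν => Γ2 (u 1) (u 0) ν) (Jv nv) := by
      have e1 : sd 0 1 = sd 1 0 := by funext μ; exact hsdsym 0 1 μ
      have e2 : (fun ν => Γ2 (u 0) (u 1) ν) = fun ν => Γ2 (u 1) (u 0) ν := by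
        funext ν; exact hΓ2sym (u 0) (u 1) ν
      rw [e1, e2]
    have hGsym2 : inducedMetric g x p 0 1 = inducedMetric g x p 1 0 := by
      rw [hγip 0 1, hγip 1 0]
      exact hipsym _ _
    have hkey2 : df p * (∑ i, ∑ j, ρ i j
        * ip (fun μ => sd i j μ + Γ2 (u i) (u j) μ - Qu i j μ) nv) = 0 := by
      have e00 := hmain 0 0
      have e01 := hmain 0 1
      have e10 := hmain 1 0
      have e11 := hmain 1 1
      simp only [hc0v, hc1v] at e00 e01 e10 e11
      simp only [hb00, hb11, hb01] at e00 e01 e10 e11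
      simp only [hγmm] at hi00 hi01 hi10 hi11
      rw [Fin.sum_univ_two, Fin.sum_univ_two, Fin.sum_univ_two]
      linear_combination (ρ 0 0) * e00 + (ρ 0 1) * e01 + (ρ 1 0) * e10 + (ρ 1 1) * e11
        + (bf 1 0 p * (ip (sd 0 0) (Jv nv) + ip (fun ν => Γ2 (u 0) (u 0) ν) (Jv nv))) * hi01
        - (bf 1 0 p * (ip (sd 0 1) (Jv nv) + ip (fun ν => Γ2 (u 0) (u 1) ν) (Jv nv))) * hi00
        + (bf 1 0 p * (ip (sd 1 0) (Jv nv) + ip (fun ν => Γ2 (u 1) (u 0) ν) (Jv nv))) * hi11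
        - (bf 1 0 p * (ip (sd 1 1) (Jv nv) + ip (fun ν => Γ2 (u 1) (u 1) ν) (Jv nv))) * hi10
        - (bf 1 0 p) * hYsym
        - (bf 1 0 p * (ρ 0 0 * (ip (sd 0 0) (Jv nv) + ip (fun ν => Γ2 (u 0) (u 0) ν) (Jv nv)) + ρ 0 1 * (ip (sd 0 1) (Jv nv) + ip (fun ν => Γ2 (u 0) (u 1) ν) (Jv nv))
            + ρ 1 0 * (ip (sd 1 0) (Jv nv) + ip (fun ν => Γ2 (u 1) (u 0) ν) (Jv nv)) + ρ 1 1 * (ip (sd 1 1) (Jv nv) + ip (fun ν => Γ2 (u 1) (u 1) ν) (Jv nv)))) * hGsym2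
    exact (mul_eq_zero.mp hkey2).resolve_left hdfne
  have hipsub : ∀ v w z : Fin N → ℝ, ip (fun ν => v ν - w ν) z = ip v z - ip w z := by
    intro v w z
    simp only [hip]
    rw [← Finset.sum_sub_distrib]
    refine Finset.sum_congr rfl fun α _ => ?_
    rw [← Finset.sum_sub_distrib]
    exact Finset.sum_congr rfl fun β _ => by ring
  -- the tension-type vector and its tangential decomposition
  set Tv : Fin N → ℝ :=
    fun μ => ∑ i, ∑ j, ρ i j * (sd i j μ + Γ2 (u i) (u j) μ - Qu i j μ) with hTvdef
  have hipTv : ∀ z : Fin N → ℝ, ip Tv z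
      = ∑ i, ∑ j, ρ i j * ip (fun μ => sd i j μ + Γ2 (u i) (u j) μ - Qu i j μ) z := by
    intro z
    have hfun : Tv = fun μ => ρ 0 0 * (sd 0 0 μ + Γ2 (u 0) (u 0) μ - Qu 0 0 μ)
        + ρ 0 1 * (sd 0 1 μ + Γ2 (u 0) (u 1) μ - Qu 0 1 μ)
        + (ρ 1 0 * (sd 1 0 μ + Γ2 (u 1) (u 0) μ - Qu 1 0 μ)
        + ρ 1 1 * (sd 1 1 μ + Γ2 (u 1) (u 1) μ - Qu 1 1 μ)) := by
      funext μ
      simp only [hTvdef, Fin.sum_univ_two]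
    rw [hfun, Fin.sum_univ_two, Fin.sum_univ_two, Fin.sum_univ_two]
    rw [hipadd, hipadd, hipadd, hipsmul, hipsmul, hipsmul, hipsmul]
  set τv : Fin 2 → ℝ := fun k => ∑ l, ρ k l * ip Tv (u l) with hτv
  set nvec : Fin N → ℝ := fun μ => Tv μ - (τv 0 * u 0 μ + τv 1 * u 1 μ) with hnvec
  have hγmval : ∀ k l : Fin 2, γmm k l = ip (u k) (u l) := fun k l => hγip k l
  have hgen : ∀ l : Fin 2, ip nvec (u l)
      = ip Tv (u l) - (τv 0 * ip (u 0) (u l) + τv 1 * ip (u 1) (u l)) := by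
    intro l
    calc ip nvec (u l)
        = ip Tv (u l) - ip (fun μ' => τv 0 * u 0 μ' + τv 1 * u 1 μ') (u l) := by
          nth_rewrite 1 [hnvec]
          exact hipsub Tv _ (u l)
      _ = ip Tv (u l) - (τv 0 * ip (u 0) (u l) + τv 1 * ip (u 1) (u l)) := by
          rw [hipadd, hipsmul, hipsmul]
  have hτexp : ∀ k : Fin 2, τv k = ρ k 0 * ip Tv (u 0) + ρ k 1 * ip Tv (u 1) := by
    intro k
    simp only [hτv, Fin.sum_univ_two]
  have hnu0 : ip nvec (u 0) = 0 := by
    have hi00 : ρ 0 0 * γmm 0 0 + ρ 0 1 * γmm 1 0 = 1 := by simpa using hinv 0 0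
    have hi10 : ρ 1 0 * γmm 0 0 + ρ 1 1 * γmm 1 0 = 0 := by simpa using hinv 1 0
    rw [hgen 0, hτexp 0, hτexp 1, ← hγmval 0 0, ← hγmval 1 0]
    linear_combination (-(ip Tv (u 0))) * hi00 - (ip Tv (u 1)) * hi10
      + (γmm 1 0 * ip Tv (u 0) - γmm 0 0 * ip Tv (u 1)) * hρsym
  have hnu1 : ip nvec (u 1) = 0 := by
    have hi01 : ρ 0 0 * γmm 0 1 + ρ 0 1 * γmm 1 1 = 0 := by simpa using hinv 0 1
    have hi11 : ρ 1 0 * γmm 0 1 + ρ 1 1 * γmm 1 1 = 1 := by simpa using hinv 1 1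
    rw [hgen 1, hτexp 0, hτexp 1, ← hγmval 0 1, ← hγmval 1 1]
    linear_combination (-(ip Tv (u 0))) * hi01 - (ip Tv (u 1)) * hi11
      + (γmm 1 1 * ip Tv (u 0) - γmm 0 1 * ip Tv (u 1)) * hρsym
  have hnu : ∀ l : Fin 2, ip nvec (u l) = 0 := by
    intro l
    fin_cases l
    · exact hnu0
    · exact hnu1
  have hnn : ip nvec nvec = 0 := by
    have h1 : ip nvec nvec
        = ip Tv nvec - (τv 0 * ip (u 0) nvec + τv 1 * ip (u 1) nvec) := by
      calc ip nvec nvec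
          = ip Tv nvec - ip (fun μ' => τv 0 * u 0 μ' + τv 1 * u 1 μ') nvec := by
            nth_rewrite 1 [hnvec]
            exact hipsub Tv _ nvec
        _ = ip Tv nvec - (τv 0 * ip (u 0) nvec + τv 1 * ip (u 1) nvec) := by
            rw [hipadd, hipsmul, hipsmul]
    have h2 : ip Tv nvec = 0 := by rw [hipTv nvec]; exact hKey nvec hnu
    have h3 : ip (u 0) nvec = 0 := by rw [hipsym]; exact hnu 0
    have h4 : ip (u 1) nvec = 0 := by rw [hipsym]; exact hnu 1
    rw [h1, h2, h3, h4]; ring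
  have hnvec0 : nvec = 0 := by
    by_contra hne
    exact absurd hnn (ne_of_gt (hippos nvec hne))
  have htangent : ∀ μ' : Fin N, Tv μ' = τv 0 * u 0 μ' + τv 1 * u 1 μ' := by
    intro μ'
    have h := congrFun hnvec0 μ'
    simp only [hnvec, Pi.zero_apply] at h
    linarith [h]
  -- evaluate at the graphical coordinates
  have hu00 : u 0 (Fin.castLE hN 0) = 1 := by simpa using hugraph 0 0
  have hu01 : u 0 (Fin.castLE hN 1) = 0 := by simpa using hugraph 0 1
  have hu10 : u 1 (Fin.castLE hN 0) = 0 := by simpa using hugraph 1 0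
  have hu11 : u 1 (Fin.castLE hN 1) = 1 := by simpa using hugraph 1 1
  have hTcast : ∀ k : Fin 2, Tv (Fin.castLE hN k)
      = ∑ i, ∑ j, ρ i j * (Γ2 (u i) (u j) (Fin.castLE hN k)
          - Qu i j (Fin.castLE hN k)) := by
    intro k
    simp only [hTvdef, hsgraph, zero_add]
  have hτ0 : τv 0 = Tv (Fin.castLE hN 0) := by
    have h := htangent (Fin.castLE hN 0)
    rw [hu00, hu10] at h
    linarith [h]
  have hτ1 : τv 1 = Tv (Fin.castLE hN 1) := by
    have h := htangent (Fin.castLE hN 1)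
    rw [hu01, hu11] at h
    linarith [h]
  -- finish
  intro μ hμ2
  have hρapp : ∀ i j : Fin 2, (inducedMetric g x p)⁻¹ i j = ρ i j := fun i j => rfl
  have huapp : ∀ (i : Fin 2) (α : Fin N), pd2 i (fun y => x y α) p = u i α := fun i α => rfl
  have hsdapp : ∀ (i j : Fin 2) (μ' : Fin N),
      pd2 i (fun q => pd2 j (fun y => x y μ') q) p = sd i j μ' := fun i j μ' => rfl
  simp only [hρapp, huapp, hsdapp]
  have hpull2d : ∀ (c : ℝ) (G : Fin 2 → Fin 2 → ℝ),
      c * (∑ i, ∑ j, G i j) = ∑ i, ∑ j, c * G i j := by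
    intro c G
    rw [Finset.mul_sum]
    exact Finset.sum_congr rfl fun i _ => Finset.mul_sum _ _ _
  have hper : ∀ i j : Fin 2,
      (∑ α, ∑ β, ρ i j * u i α * u j β
        * ((∑ k : Fin 2, u k μ * christoffel g (Fin.castLE hN k) α β (x p))
          - (∑ k : Fin 2, u k μ * Qtensor g J (Fin.castLE hN k) α β (x p))
          + Qtensor g J μ α β (x p) - christoffel g μ α β (x p)))
      = (∑ k : Fin 2, u k μ * (ρ i j * (Γ2 (u i) (u j) (Fin.castLE hN k)
            - Qu i j (Fin.castLE hN k))))
        + ρ i j * (Qu i j μ - Γ2 (u i) (u j) μ) := by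
    intro i j
    rw [Fin.sum_univ_two]
    simp only [hΓ2, hQu]
    have hcomb2 : ∀ (c : ℝ) (F G : Fin N → Fin N → ℝ),
        c * ((∑ α, ∑ β, F α β) - ∑ α, ∑ β, G α β) = ∑ α, ∑ β, c * (F α β - G α β) := by
      intro c F G
      rw [← Finset.sum_sub_distrib, Finset.mul_sum]
      refine Finset.sum_congr rfl fun α _ => ?_
      rw [← Finset.sum_sub_distrib, Finset.mul_sum]
    have hpull : ∀ (c : ℝ) (G : Fin N → Fin N → ℝ),
        c * (∑ α, ∑ β, G α β) = ∑ α, ∑ β, c * G α β := by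
      intro c G
      rw [Finset.mul_sum]
      exact Finset.sum_congr rfl fun α _ => Finset.mul_sum _ _ _
    rw [hcomb2, hcomb2, hcomb2, hpull, hpull]
    rw [← Finset.sum_add_distrib, ← Finset.sum_add_distrib]
    refine Finset.sum_congr rfl fun α _ => ?_
    rw [← Finset.sum_add_distrib, ← Finset.sum_add_distrib]
    refine Finset.sum_congr rfl fun β _ => ?_
    rw [Fin.sum_univ_two, Fin.sum_univ_two]
    ring
  have hLHS : (∑ i, ∑ j, ρ i j * sd i j μ)
      = Tv μ - ∑ i, ∑ j, ρ i j * (Γ2 (u i) (u j) μ - Qu i j μ) := by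
    simp only [hTvdef]
    rw [← Finset.sum_sub_distrib]
    refine Finset.sum_congr rfl fun i _ => ?_
    rw [← Finset.sum_sub_distrib]
    refine Finset.sum_congr rfl fun j _ => ?_
    ring
  rw [hLHS, htangent μ, hτ0, hτ1, hTcast 0, hTcast 1]
  rw [Finset.sum_congr rfl fun i (_ : i ∈ Finset.univ) =>
    Finset.sum_congr rfl fun j (_ : j ∈ Finset.univ) => hper i j]
  simp only [Fin.sum_univ_two]
  ring
end

section
/- Let m ≥ 2, let e₁, e₂ be the first two standard basis vectors of ℝ^m, let W := {0}×{0}×ℝ^{m−2} ⊆ ℝ^m be the subspace of vectors whose first two coordinates vanish, and let w₁, w₂ ∈ W with ‖w₁‖² + ‖w₂‖² ≤ 10⁻²⁰. Set v₁ := e₁ + w₁, v₂ := e₂ + w₂, and let T := span{v₁, v₂} with π_T the Euclidean orthogonal projection onto T. Then for every X ∈ W: ‖π_T(X)‖ ≤ 10⁻⁹·‖X‖, and consequently ‖X‖ ≤ 2·‖X − π_T(X)‖. -/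
/-!
Write `p = a v₁ + b v₂` for the projection of `X`. Since `X` is orthogonal to `e₁, e₂`,
`‖p‖² = ⟪X, p⟫ = a ⟪X, w₁⟫ + b ⟪X, w₂⟫`, and `|a|, |b| ≤ ‖p‖` because `a, b` are the first two
coordinates of `p`. Hence `‖p‖² ≤ (‖w₁‖ + ‖w₂‖) ‖X‖ ‖p‖`, and `‖w₁‖ + ‖w₂‖ ≤ √2 · 10⁻¹⁰`.
-/

open RealInnerProductSpace

theorem Submodule.norm_starProjection_le_of_inner_le {E : Type*} [NormedAddCommGroup E]
    [InnerProductSpace ℝ E] (K : Submodule ℝ E) [K.HasOrthogonalProjection] {x : E} {c : ℝ}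
    (hc : 0 ≤ c) (h : ∀ y ∈ K, ⟪x, y⟫ ≤ c * ‖x‖ * ‖y‖) :
    ‖K.starProjection x‖ ≤ c * ‖x‖ := by
  set p := K.starProjection x
  have hp : ‖p‖ ^ 2 ≤ c * ‖x‖ * ‖p‖ := by
    have hnorm : ‖p‖ ^ 2 = ⟪x, p⟫ := by
      simpa [real_inner_comm] using (K.re_inner_starProjection_eq_normSq x).symm
    exact hnorm ▸ h p (K.starProjection_apply_mem x)
  rcases (norm_nonneg p).eq_or_lt with h0 | h0
  · rw [← h0]; positivity
  · nlinarith

theorem EuclideanSpace.inner_single_one_add_of_apply_eq_zero {ι : Type*} [Fintype ι]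
    [DecidableEq ι] {i : ι} {x : EuclideanSpace ℝ ι} (hx : x i = 0) (w : EuclideanSpace ℝ ι) :
    ⟪x, EuclideanSpace.single i 1 + w⟫ = ⟪x, w⟫ := by
  simp [inner_add_right, EuclideanSpace.inner_single_right, hx]

theorem inner_le_of_mem_span_single_one_add {ι : Type*} [Fintype ι] [DecidableEq ι] {i j : ι}
    (hij : i ≠ j) {w₁ w₂ x y : EuclideanSpace ℝ ι} (hw₁i : w₁ i = 0) (hw₁j : w₁ j = 0)
    (hw₂i : w₂ i = 0) (hw₂j : w₂ j = 0) (hxi : x i = 0) (hxj : x j = 0)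
    (hy : y ∈ Submodule.span ℝ {EuclideanSpace.single i 1 + w₁, EuclideanSpace.single j 1 + w₂}) :
    ⟪x, y⟫ ≤ (‖w₁‖ + ‖w₂‖) * ‖x‖ * ‖y‖ := by
  obtain ⟨a, b, rfl⟩ := Submodule.mem_span_pair.mp hy
  set y := a • (EuclideanSpace.single i 1 + w₁) + b • (EuclideanSpace.single j 1 + w₂)
  have hyi : y i = a := by simp [y, hw₁i, hw₂i, hij.symm]
  have hyj : y j = b := by simp [y, hw₁j, hw₂j, hij]
  have ha : |a| ≤ ‖y‖ := hyi ▸ PiLp.norm_apply_le y i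
  have hb : |b| ≤ ‖y‖ := hyj ▸ PiLp.norm_apply_le y j
  have hterm : ∀ {c : ℝ} (w : EuclideanSpace ℝ ι), |c| ≤ ‖y‖ → c * ⟪x, w⟫ ≤ ‖y‖ * (‖x‖ * ‖w‖) :=
    fun w hc => (le_abs_self _).trans <| (abs_mul _ _).trans_le <|
      mul_le_mul hc (abs_real_inner_le_norm x w) (abs_nonneg _) (norm_nonneg y)
  calc ⟪x, y⟫ = a * ⟪x, w₁⟫ + b * ⟪x, w₂⟫ := by
        simp only [y, inner_add_right, real_inner_smul_right,
          EuclideanSpace.inner_single_one_add_of_apply_eq_zero hxi,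
          EuclideanSpace.inner_single_one_add_of_apply_eq_zero hxj]
    _ ≤ ‖y‖ * (‖x‖ * ‖w₁‖) + ‖y‖ * (‖x‖ * ‖w₂‖) := add_le_add (hterm w₁ ha) (hterm w₂ hb)
    _ = (‖w₁‖ + ‖w₂‖) * ‖x‖ * ‖y‖ := by ring

/-- **Projection lemma (flat-metric core).**  Let `m ≥ 2`, `W ⊆ ℝ^m` the subspace of
vectors whose first two coordinates vanish, `w₁, w₂ ∈ W` with `‖w₁‖² + ‖w₂‖² ≤ 10⁻²⁰`,
`v₁ := e₁ + w₁`, `v₂ := e₂ + w₂`, `T := span{v₁, v₂}`, and `π_T` the Euclidean orthogonal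
projection onto `T`.  Then for every `X ∈ W`: `‖π_T(X)‖ ≤ 10⁻⁹·‖X‖`, and consequently
`‖X‖ ≤ 2·‖X − π_T(X)‖`. -/
theorem stmt16 (m : ℕ) (hm : 2 ≤ m)
    (w₁ w₂ : EuclideanSpace ℝ (Fin m))
    (hw₁0 : w₁ ⟨0, by omega⟩ = 0) (hw₁1 : w₁ ⟨1, by omega⟩ = 0)
    (hw₂0 : w₂ ⟨0, by omega⟩ = 0) (hw₂1 : w₂ ⟨1, by omega⟩ = 0)
    (hsmall : ‖w₁‖ ^ 2 + ‖w₂‖ ^ 2 ≤ 1e-20)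
    (v₁ v₂ : EuclideanSpace ℝ (Fin m))
    (hv₁ : v₁ = EuclideanSpace.single ⟨0, by omega⟩ 1 + w₁)
    (hv₂ : v₂ = EuclideanSpace.single ⟨1, by omega⟩ 1 + w₂)
    (T : Submodule ℝ (EuclideanSpace ℝ (Fin m)))
    (hT : T = Submodule.span ℝ {v₁, v₂}) :
    ∀ X : EuclideanSpace ℝ (Fin m), X ⟨0, by omega⟩ = 0 → X ⟨1, by omega⟩ = 0 →
      ‖(T.orthogonalProjection X : EuclideanSpace ℝ (Fin m))‖ ≤ 1e-9 * ‖X‖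
      ∧ ‖X‖ ≤ 2 * ‖X - (T.orthogonalProjection X : EuclideanSpace ℝ (Fin m))‖ := by
  intro X hX0 hX1
  change ‖T.starProjection X‖ ≤ _ ∧ ‖X‖ ≤ 2 * ‖X - T.starProjection X‖
  subst hv₁ hv₂
  have hw : ‖w₁‖ + ‖w₂‖ ≤ 1e-9 := by
    nlinarith [norm_nonneg w₁, norm_nonneg w₂, sq_nonneg (‖w₁‖ - ‖w₂‖)]
  have hproj : ‖_‖ ≤ 1e-9 * ‖X‖ := calc
    _ ≤ (‖w₁‖ + ‖w₂‖) * ‖X‖ :=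
      Submodule.norm_starProjection_le_of_inner_le _ (by positivity) fun y hy =>
        inner_le_of_mem_span_single_one_add (by simp [Fin.ext_iff]) hw₁0 hw₁1 hw₂0 hw₂1
          hX0 hX1 (hT ▸ hy)
    _ ≤ 1e-9 * ‖X‖ := by gcongr
  exact ⟨hproj, by linarith [norm_sub_norm_le X (T.starProjection X), norm_nonneg X]⟩
end

section
/- Let s < t be real numbers, let g : [s,t] → ℝ be continuously differentiable with g ≥ 0, and let f : [s,t] → ℝ be monotone increasing (nondecreasing) with f ≥ 0. Assume there exists an open set U ⊆ (s,t) whose complement in (s,t) has Lebesgue measure zero, such that f is locally constant on U. Then g(t)·f(t) − g(s)·f(s) − ∫ₛᵗ g'(σ)·f(σ) dσ ≥ 0. -/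
/-!
The function `Ψ x = g x * f x - ∫ σ in s..x, g' σ * f σ` is nondecreasing on `[s, t]`. On a
subinterval `[x, y]`,
`Ψ y - Ψ x = g y * (f y - f x) + ∫ σ in x..y, g' σ * (f x - f σ)`,
and since `|f x - f σ| ≤ f y - f x` there, this is at least `-M (y - x) (f y - f x)` with
`M = sup |g'|`. Summed over a uniform partition of `[s, t]` into `n` pieces, both `Ψ` and `f`
telescope, so `Ψ t - Ψ s ≥ -M (t - s) (f t - f s) / n` for every `n`.
-/

open MeasureTheory Set

theorem le_of_forall_neg_mul_mul_le_sub {Ψ F : ℝ → ℝ} {a b C : ℝ} (hab : a ≤ b)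
    (h : ∀ x y, a ≤ x → x ≤ y → y ≤ b → -(C * (y - x) * (F y - F x)) ≤ Ψ y - Ψ x) :
    Ψ a ≤ Ψ b := by
  have hpartition : ∀ n : ℕ, 0 < n → -(C * (b - a) * (F b - F a)) / n ≤ Ψ b - Ψ a := by
    intro n hn
    have hn' : (0 : ℝ) < n := by exact_mod_cast hn
    set δ := (b - a) / n
    have hδ : 0 ≤ δ := div_nonneg (sub_nonneg.2 hab) hn'.le
    set x : ℕ → ℝ := fun i => a + i * δ
    have hx0 : x 0 = a := by simp [x]
    have hxn : x n = b := by simp only [x, δ]; field_simp; ring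
    have hstep : ∀ i, x (i + 1) - x i = δ := fun i => by simp only [x]; push_cast; ring
    have hmem : ∀ i ≤ n, a ≤ x i ∧ x i ≤ b := fun i hi => by
      have : (i : ℝ) ≤ n := by exact_mod_cast hi
      constructor
      · exact le_add_of_nonneg_right (by positivity)
      · rw [← hxn]; simp only [x]; gcongr
    calc -(C * (b - a) * (F b - F a)) / n
        = ∑ i ∈ Finset.range n, -(C * (x (i + 1) - x i) * (F (x (i + 1)) - F (x i))) := by
          simp only [hstep, neg_mul_eq_mul_neg, ← Finset.mul_sum, Finset.sum_neg_distrib,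
            Finset.sum_range_sub (fun i => F (x i)), hx0, hxn, δ]
          field_simp
      _ ≤ ∑ i ∈ Finset.range n, (Ψ (x (i + 1)) - Ψ (x i)) := by
          refine Finset.sum_le_sum fun i hi => ?_
          have hi := Finset.mem_range.1 hi
          exact h _ _ (hmem i hi.le).1 (by linarith [hstep i]) (hmem (i + 1) hi).2
      _ = Ψ b - Ψ a := by rw [Finset.sum_range_sub (fun i => Ψ (x i)), hx0, hxn]
  have hlim := tendsto_const_div_atTop_nhds_zero_nat (-(C * (b - a) * (F b - F a)))
  exact sub_nonneg.1 <| le_of_tendsto hlim <|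
    (Filter.eventually_gt_atTop 0).mono hpartition

theorem neg_mul_mul_le_mul_sub_integral {g g' f : ℝ → ℝ} {x y M : ℝ} (hxy : x ≤ y)
    (hg : ∀ σ ∈ Icc x y, HasDerivWithinAt g (g' σ) (Icc x y) σ)
    (hg' : ContinuousOn g' (Icc x y)) (hM : ∀ σ ∈ Icc x y, |g' σ| ≤ M)
    (hgy : 0 ≤ g y) (hf : MonotoneOn f (Icc x y)) :
    -(M * (y - x) * (f y - f x)) ≤ g y * f y - g x * f x - ∫ σ in x..y, g' σ * f σ := by
  have hIcc : uIcc x y = Icc x y := uIcc_of_le hxy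
  have hg'int : IntervalIntegrable g' volume x y := (hIcc ▸ hg').intervalIntegrable
  have hg'fint : IntervalIntegrable (fun σ => g' σ * f σ) volume x y :=
    (hIcc ▸ hf).intervalIntegrable.continuousOn_mul (hIcc ▸ hg')
  have hftc : ∫ σ in x..y, g' σ = g y - g x :=
    intervalIntegral.integral_eq_sub_of_hasDerivAt_of_le hxy
      (fun σ hσ => (hg σ hσ).continuousWithinAt)
      (fun σ hσ => (hg σ (Ioo_subset_Icc_self hσ)).hasDerivAt (Icc_mem_nhds hσ.1 hσ.2))
      hg'int
  have hdecomp : g y * f y - g x * f x - ∫ σ in x..y, g' σ * f σ =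
      g y * (f y - f x) + ∫ σ in x..y, g' σ * (f x - f σ) := by
    have hsplit : ∫ σ in x..y, g' σ * (f x - f σ) =
        (∫ σ in x..y, g' σ * f x) - ∫ σ in x..y, g' σ * f σ := by
      rw [← intervalIntegral.integral_sub (hg'int.mul_const (f x)) hg'fint]
      simp only [mul_sub]
    rw [hsplit, intervalIntegral.integral_mul_const, hftc]
    ring
  have hbound : ‖∫ σ in x..y, g' σ * (f x - f σ)‖ ≤ M * (f y - f x) * |y - x| := by
    refine intervalIntegral.norm_integral_le_of_norm_le_const fun σ hσ => ?_
    rw [uIoc_of_le hxy] at hσ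
    have hσ' : σ ∈ Icc x y := Ioc_subset_Icc_self hσ
    have hfxσ := hf (left_mem_Icc.2 hxy) hσ' hσ.1.le
    have hfσy := hf hσ' (right_mem_Icc.2 hxy) hσ.2
    rw [Real.norm_eq_abs, abs_mul, abs_sub_comm, abs_of_nonneg (sub_nonneg.2 hfxσ)]
    exact mul_le_mul (hM σ hσ') (by linarith) (sub_nonneg.2 hfxσ) ((abs_nonneg _).trans (hM σ hσ'))
  rw [Real.norm_eq_abs, abs_of_nonneg (sub_nonneg.2 hxy)] at hbound
  have hgf : 0 ≤ g y * (f y - f x) :=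
    mul_nonneg hgy (sub_nonneg.2 (hf (left_mem_Icc.2 hxy) (right_mem_Icc.2 hxy) hxy))
  rw [hdecomp]
  linarith [neg_abs_le (∫ σ in x..y, g' σ * (f x - f σ))]

theorem stmt17_general (s t : ℝ) (hst : s < t) (g g' f : ℝ → ℝ)
    (hg' : ∀ σ ∈ Set.Icc s t, HasDerivWithinAt g (g' σ) (Set.Icc s t) σ)
    (hg'cont : ContinuousOn g' (Set.Icc s t))
    (hg_nonneg : ∀ σ ∈ Set.Icc s t, 0 ≤ g σ)
    (hf_mono : MonotoneOn f (Set.Icc s t)) :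
    0 ≤ g t * f t - g s * f s - ∫ σ in s..t, g' σ * f σ := by
  obtain ⟨M, hM⟩ := isCompact_Icc.exists_bound_of_continuousOn hg'cont
  have hint : ∀ x ∈ Icc s t, IntervalIntegrable (fun σ => g' σ * f σ) volume s x := fun x hx =>
    have hsub : uIcc s x ⊆ Icc s t := uIcc_subset_Icc (left_mem_Icc.2 hst.le) hx
    (hf_mono.mono hsub).intervalIntegrable.continuousOn_mul (hg'cont.mono hsub)
  have hincrement : ∀ x y, s ≤ x → x ≤ y → y ≤ t →
      -(M * (y - x) * (f y - f x)) ≤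
        (g y * f y - ∫ σ in s..y, g' σ * f σ) - (g x * f x - ∫ σ in s..x, g' σ * f σ) := by
    intro x y hsx hxy hyt
    have hsub : Icc x y ⊆ Icc s t := Icc_subset_Icc hsx hyt
    rw [sub_sub_sub_comm, intervalIntegral.integral_interval_sub_left
      (hint y ⟨hsx.trans hxy, hyt⟩) (hint x ⟨hsx, hxy.trans hyt⟩)]
    exact neg_mul_mul_le_mul_sub_integral hxy (fun σ hσ => (hg' σ (hsub hσ)).mono hsub)
      (hg'cont.mono hsub) (fun σ hσ => hM σ (hsub hσ)) (hg_nonneg y ⟨hsx.trans hxy, hyt⟩)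
      (hf_mono.mono hsub)
  have hΨ := le_of_forall_neg_mul_mul_le_sub hst.le hincrement
  simp only [intervalIntegral.integral_same, sub_zero] at hΨ
  linarith

/-- **Singular part estimate in the product-monotonicity lemma.**  Let `s < t`,
`g : [s,t] → ℝ` continuously differentiable with derivative `g'` and `g ≥ 0`, and
`f : [s,t] → ℝ` monotone increasing with `f ≥ 0`.  Suppose there is an open set
`U ⊆ (s,t)` of full measure in `(s,t)` on which `f` is locally constant.  Then
`g(t)·f(t) − g(s)·f(s) − ∫ₛᵗ g'(σ)·f(σ) dσ ≥ 0`. -/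
theorem stmt17 (s t : ℝ) (hst : s < t) (g g' f : ℝ → ℝ)
    (hg' : ∀ σ ∈ Set.Icc s t, HasDerivWithinAt g (g' σ) (Set.Icc s t) σ)
    (hg'cont : ContinuousOn g' (Set.Icc s t))
    (hg_nonneg : ∀ σ ∈ Set.Icc s t, 0 ≤ g σ)
    (hf_mono : MonotoneOn f (Set.Icc s t))
    (hf_nonneg : ∀ σ ∈ Set.Icc s t, 0 ≤ f σ)
    (U : Set ℝ) (hU_open : IsOpen U) (hU_sub : U ⊆ Set.Ioo s t)
    (hU_full : volume (Set.Ioo s t \ U) = 0)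
    (hf_locconst : ∀ x ∈ U, ∀ᶠ y in nhds x, f y = f x) :
    0 ≤ g t * f t - g s * f s - ∫ σ in s..t, g' σ * f σ :=
  stmt17_general s t hst g g' f hg' hg'cont hg_nonneg hf_mono
end
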